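/- arXiv:1003.5552 — 10 statements merged into one kernel-verified Lean document; each statement's English description precedes it below -/
import Mathlib

section
/- Let F ⊣ R : C → V be an adjunction between cartesian closed categories with F preserving finite products. Then for objects V, W of V and X of C there is a natural isomorphism R(FV ⟹ X) ≅ V ⟹ RX, i.e. the adjunction is enriched in V via hom(X,Y) := R(X ⟹ Y). -/
open CategoryTheory CategoryTheory.Limits MonoidalCategory

universe v₁ v₂ u₁ u₂

section Lemmas

variable {A : Type u₁} [Category.{v₁} A] {B : Type u₂} [Category.{v₂} B]

theorem conjugateEquiv_whiskerLeft (F : A ⥤ B) {G : B ⥤ A} (adj : F ⊣ G)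
    {L₁ L₂ R₁ R₂ : B ⥤ B} (adj₁ : L₁ ⊣ R₁) (adj₂ : L₂ ⊣ R₂) (α : L₂ ⟶ L₁) :
    conjugateEquiv (adj.comp adj₁) (adj.comp adj₂) (Functor.whiskerLeft F α) =
      Functor.whiskerRight (conjugateEquiv adj₁ adj₂ α) G := by
  ext X
  simp [conjugateEquiv, mateEquiv, Adjunction.comp]
  have h1 : α.app (F.obj (G.obj (R₁.obj X))) ≫ L₁.map (adj.counit.app (R₁.obj X)) ≫
      adj₁.counit.app X =
      L₂.map (adj.counit.app (R₁.obj X)) ≫ α.app (R₁.obj X) ≫ adj₁.counit.app X := by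
    rw [← Category.assoc, ← α.naturality, Category.assoc]
    rfl
  simp only [← Functor.map_comp]
  rw [h1]
  have h2 : adj₂.unit.app (F.obj (G.obj (R₁.obj X))) ≫
      R₂.map (L₂.map (adj.counit.app (R₁.obj X)) ≫ α.app (R₁.obj X) ≫ adj₁.counit.app X) =
      adj.counit.app (R₁.obj X) ≫ adj₂.unit.app (R₁.obj X) ≫
        R₂.map (α.app (R₁.obj X) ≫ adj₁.counit.app X) := by
    rw [R₂.map_comp, ← Category.assoc, ← Functor.comp_map, ← adj₂.unit.naturality,
      Category.assoc]
    rfl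
  rw [h2, G.map_comp, ← Category.assoc, adj.right_triangle_components, Category.id_comp]

theorem conjugateEquiv_whiskerRight (F : A ⥤ B) {G : B ⥤ A} (adj : F ⊣ G)
    {L₁ L₂ R₁ R₂ : A ⥤ A} (adj₁ : L₁ ⊣ R₁) (adj₂ : L₂ ⊣ R₂) (α : L₂ ⟶ L₁) :
    conjugateEquiv (adj₁.comp adj) (adj₂.comp adj) (Functor.whiskerRight α F) =
      Functor.whiskerLeft G (conjugateEquiv adj₁ adj₂ α) := by
  ext X
  simp [conjugateEquiv, mateEquiv, Adjunction.comp]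
  have h : adj.unit.app (L₂.obj (R₁.obj (G.obj X))) ≫
      G.map (F.map (α.app (R₁.obj (G.obj X))) ≫ F.map (adj₁.counit.app (G.obj X)) ≫
        adj.counit.app X) =
      (α.app (R₁.obj (G.obj X)) ≫ adj₁.counit.app (G.obj X)) ≫ adj.unit.app (G.obj X) ≫
        G.map (adj.counit.app X) := by
    rw [← F.map_comp_assoc, G.map_comp, ← Category.assoc, ← Functor.comp_map F G,
      ← adj.unit.naturality, Category.assoc]
    rfl
  simp only [← Functor.map_comp]
  rw [h]
  simp
end Lemmas

section Main

variable {C : Type u₁} [Category.{v₁} C] {V : Type u₂} [Category.{v₂} V]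
    [CartesianMonoidalCategory C] [CartesianMonoidalCategory V]
    [MonoidalClosed C] [MonoidalClosed V]
    (F : V ⥤ C) (R : C ⥤ V) (adj : F ⊣ R) [Limits.PreservesFiniteProducts F]

/-- The comparison isomorphism `R (F W ⟹ -) ≅ W ⟹ R -`. -/
noncomputable def kappa (W : V) : ihom (F.obj W) ⋙ R ≅ R ⋙ ihom W :=
  conjugateIsoEquiv (adj.comp (ihom.adjunction (F.obj W)))
    ((ihom.adjunction W).comp adj) (CartesianMonoidalCategory.prodComparisonNatIso F W)

theorem kappa_natural {W₁ W₂ : V} (g : W₂ ⟶ W₁) :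
    Functor.whiskerRight (MonoidalClosed.pre (F.map g)) R ≫ (kappa F R adj W₂).hom =
      (kappa F R adj W₁).hom ≫ Functor.whiskerLeft R (MonoidalClosed.pre g) := by
  dsimp only [kappa, conjugateIsoEquiv_apply_hom, CartesianMonoidalCategory.prodComparisonNatIso_hom,
    MonoidalClosed.pre]
  rw [conjugateIsoEquiv_apply_hom, conjugateIsoEquiv_apply_hom]
  rw [← conjugateEquiv_whiskerLeft F adj (ihom.adjunction (F.obj W₁))
      (ihom.adjunction (F.obj W₂)) ((curriedTensor C).map (F.map g)),
    ← conjugateEquiv_whiskerRight F adj (ihom.adjunction W₁) (ihom.adjunction W₂)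
      ((curriedTensor V).map g),
    conjugateEquiv_comp, conjugateEquiv_comp]
  congr 1
  ext B
  simp only [NatTrans.comp_app, Functor.whiskerLeft_app, Functor.whiskerRight_app, curriedTensor_map_app,
    CartesianMonoidalCategory.prodComparisonNatTrans_app, Functor.comp_obj, curriedTensor_obj_obj]
  exact (CartesianMonoidalCategory.prodComparison_natural_whiskerRight F g).symm

end Main



/-- Let `F ⊣ R : C → V` be an adjunction between cartesian closed
categories with `F` preserving finite products.  Then there is an isomorphism
`R (F V ⟹ X) ≅ V ⟹ R X`, natural in both `V` and `X`; that is, the adjunction is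
enriched in `V` via `hom(X, Y) := R (X ⟹ Y)`. -/
theorem statement0 {C : Type u₁} [Category.{v₁} C] {V : Type u₂} [Category.{v₂} V]
    [CartesianMonoidalCategory C] [CartesianMonoidalCategory V]
    [MonoidalClosed C] [MonoidalClosed V]
    (F : V ⥤ C) (R : C ⥤ V) (adj : F ⊣ R) [Limits.PreservesFiniteProducts F] :
    Nonempty ((F.op.prod (𝟭 C) ⋙ Functor.uncurry.obj (MonoidalClosed.internalHom (C := C)) ⋙ R) ≅
      ((𝟭 Vᵒᵖ).prod R ⋙ Functor.uncurry.obj (MonoidalClosed.internalHom (C := V)))) := by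
  refine ⟨NatIso.ofComponents (fun P => (kappa F R adj P.1.unop).app P.2) ?_⟩
  rintro ⟨V₁, X₁⟩ ⟨V₂, X₂⟩ ⟨g, f⟩
  have h1 := congr_app (kappa_natural F R adj g.unop) X₁
  have h2 := (kappa F R adj V₂.unop).hom.naturality f
  simp only [NatTrans.comp_app, Functor.whiskerRight_app, Functor.whiskerLeft_app, Functor.comp_map] at h1 h2
  have : (F.op.prod (𝟭 C) ⋙ Functor.uncurry.obj MonoidalClosed.internalHom ⋙ R).map (g, f) =
      R.map ((MonoidalClosed.pre (F.map g.unop)).app X₁) ≫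
        R.map ((ihom (F.obj (Opposite.unop V₂))).map f) := by
    simp [MonoidalClosed.internalHom]
  rw [this]
  have h3 : ((𝟭 Vᵒᵖ).prod R ⋙ Functor.uncurry.obj MonoidalClosed.internalHom).map (g, f) =
      (MonoidalClosed.pre g.unop).app (R.obj X₁) ≫ (ihom (Opposite.unop V₂)).map (R.map f) := by
    simp [MonoidalClosed.internalHom]
  rw [h3]
  dsimp only [Iso.app_hom]
  exact (Category.assoc _ _ _).trans ((congrArg _ h2).trans ((reassoc_of% h1) _))
end

section
/- Suppose L ⊣ F ⊣ R : C → V with C and V cartesian closed. Then there is a natural isomorphism L(X × FV) ≅ LX × V (the Frobenius law for L ⊣ F) if and only if there is a natural isomorphism F(V ⟹ W) ≅ FV ⟹ FW (F preserves exponentials). -/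
open CategoryTheory CategoryTheory.Limits MonoidalCategory

universe v₁ v₂ u₁ u₂

noncomputable section FrobAux

namespace FrobAux

open MonoidalClosed

attribute [local instance] BraidedCategory.ofCartesianMonoidalCategory

variable {C : Type u₁} [Category.{v₁} C] {V : Type u₂} [Category.{v₂} V]
    [CartesianMonoidalCategory C] [CartesianMonoidalCategory V]
    [MonoidalClosed C] [MonoidalClosed V]
    (L : C ⥤ V) (F : V ⥤ C) (adjLF : L ⊣ F)

/-- `(X ⟶ F(v ⟹ w)) ≃ (L X ⊗ v ⟶ w)`. -/
def eqA (X : C) (v w : V) : (X ⟶ F.obj ((ihom v).obj w)) ≃ (L.obj X ⊗ v ⟶ w) :=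
  ((adjLF.homEquiv X _).symm.trans
    (((ihom.adjunction v).homEquiv (L.obj X) w).symm)).trans
    ((β_ v (L.obj X)).homCongr (Iso.refl w))

/-- `(X ⟶ F v ⟹ F w) ≃ (L (X ⊗ F v) ⟶ w)`. -/
def eqB (X : C) (v w : V) : (X ⟶ (ihom (F.obj v)).obj (F.obj w)) ≃ (L.obj (X ⊗ F.obj v) ⟶ w) :=
  (((ihom.adjunction (F.obj v)).homEquiv X (F.obj w)).symm.trans
    ((β_ (F.obj v) X).homCongr (Iso.refl (F.obj w)))).trans
    (adjLF.homEquiv _ w).symm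

lemma eqA_apply (X : C) (v w : V) (f : X ⟶ F.obj ((ihom v).obj w)) :
    eqA L F adjLF X v w f =
      (β_ v (L.obj X)).inv ≫ MonoidalClosed.uncurry ((adjLF.homEquiv X _).symm f) := by
  simp [eqA, Iso.homCongr]
  rfl

lemma eqB_apply (X : C) (v w : V) (f : X ⟶ (ihom (F.obj v)).obj (F.obj w)) :
    eqB L F adjLF X v w f =
      (adjLF.homEquiv _ w).symm ((β_ (F.obj v) X).inv ≫ MonoidalClosed.uncurry f) := by
  simp [eqB, Iso.homCongr]
  rfl

lemma eqA_nat_X {X X' : C} (u : X' ⟶ X) (v w : V) (f : X ⟶ F.obj ((ihom v).obj w)) :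
    eqA L F adjLF X' v w (u ≫ f) = (L.map u ▷ v) ≫ eqA L F adjLF X v w f := by
  simp [eqA_apply, Adjunction.homEquiv_naturality_left_symm, uncurry_natural_left,
    BraidedCategory.braiding_inv_naturality_left, BraidedCategory.braiding_inv_naturality_right]

lemma eqA_nat_w (X : C) (v : V) {w w' : V} (k : w ⟶ w') (f : X ⟶ F.obj ((ihom v).obj w)) :
    eqA L F adjLF X v w' (f ≫ F.map ((ihom v).map k)) = eqA L F adjLF X v w f ≫ k := by
  simp [eqA_apply, Adjunction.homEquiv_naturality_right_symm, uncurry_natural_right]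

lemma eqA_nat_v (X : C) {v v' : V} (h : v' ⟶ v) (w : V) (f : X ⟶ F.obj ((ihom v).obj w)) :
    eqA L F adjLF X v' w (f ≫ F.map ((pre h).app w)) =
      (L.obj X ◁ h) ≫ eqA L F adjLF X v w f := by
  simp [eqA_apply, Adjunction.homEquiv_naturality_right_symm, uncurry_eq,
    id_tensor_pre_app_comp_ev, whisker_exchange_assoc]

lemma eqB_nat_X {X X' : C} (u : X' ⟶ X) (v w : V) (f : X ⟶ (ihom (F.obj v)).obj (F.obj w)) :
    eqB L F adjLF X' v w (u ≫ f) = L.map (u ▷ F.obj v) ≫ eqB L F adjLF X v w f := by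
  simp only [eqB_apply, Adjunction.homEquiv_naturality_left_symm, uncurry_natural_left]
  rw [← L.map_comp_assoc, ← BraidedCategory.braiding_inv_naturality_left, L.map_comp_assoc]

lemma eqB_nat_w (X : C) (v : V) {w w' : V} (k : w ⟶ w')
    (f : X ⟶ (ihom (F.obj v)).obj (F.obj w)) :
    eqB L F adjLF X v w' (f ≫ (ihom (F.obj v)).map (F.map k)) = eqB L F adjLF X v w f ≫ k := by
  simp only [eqB_apply, uncurry_natural_right, ← Category.assoc,
    Adjunction.homEquiv_naturality_right_symm]

lemma eqB_nat_v (X : C) {v v' : V} (h : v' ⟶ v) (w : V)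
    (f : X ⟶ (ihom (F.obj v)).obj (F.obj w)) :
    eqB L F adjLF X v' w (f ≫ (pre (F.map h)).app (F.obj w)) =
      L.map (X ◁ F.map h) ≫ eqB L F adjLF X v w f := by
  simp [eqB_apply, Adjunction.homEquiv_naturality_left_symm, uncurry_eq,
    id_tensor_pre_app_comp_ev, whisker_exchange_assoc]
  rw [← L.map_comp_assoc, ← BraidedCategory.braiding_inv_naturality_right, L.map_comp_assoc]

lemma eqA_symm_nat_X {X X' : C} (u : X' ⟶ X) (v w : V) (g : L.obj X ⊗ v ⟶ w) :
    (eqA L F adjLF X' v w).symm ((L.map u ▷ v) ≫ g) = u ≫ (eqA L F adjLF X v w).symm g := by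
  apply (eqA L F adjLF X' v w).injective
  rw [Equiv.apply_symm_apply, eqA_nat_X, Equiv.apply_symm_apply]

lemma eqA_symm_nat_v (X : C) {v v' : V} (h : v' ⟶ v) (w : V) (g : L.obj X ⊗ v ⟶ w) :
    (eqA L F adjLF X v' w).symm ((L.obj X ◁ h) ≫ g) =
      (eqA L F adjLF X v w).symm g ≫ F.map ((pre h).app w) := by
  apply (eqA L F adjLF X v' w).injective
  rw [Equiv.apply_symm_apply, eqA_nat_v, Equiv.apply_symm_apply]

lemma eqA_symm_nat_w (X : C) (v : V) {w w' : V} (k : w ⟶ w') (g : L.obj X ⊗ v ⟶ w) :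
    (eqA L F adjLF X v w').symm (g ≫ k) =
      (eqA L F adjLF X v w).symm g ≫ F.map ((ihom v).map k) := by
  apply (eqA L F adjLF X v w').injective
  rw [Equiv.apply_symm_apply, eqA_nat_w, Equiv.apply_symm_apply]

section Fwd

variable (e : ((𝟭 C).prod F ⋙ MonoidalCategory.tensor C ⋙ L) ≅
    (L.prod (𝟭 V) ⋙ MonoidalCategory.tensor V))

/-- Naturality of the Frobenius iso in the first variable, rephrased. -/
lemma e_nat_X {X X' : C} (u : X' ⟶ X) (v : V) :
    L.map (u ▷ F.obj v) ≫ e.hom.app (X, v) = e.hom.app (X', v) ≫ (L.map u ▷ v) := by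
  have := e.hom.naturality ((u, 𝟙 v) : ((X' : C), v) ⟶ (X, v))
  simpa using this

lemma e_nat_v (X : C) {v v' : V} (h : v' ⟶ v) :
    L.map (X ◁ F.map h) ≫ e.hom.app (X, v) = e.hom.app (X, v') ≫ (L.obj X ◁ h) := by
  have := e.hom.naturality ((𝟙 X, h) : ((X : C), v') ⟶ (X, v))
  simpa using this

/-- The full hom-set equivalence implementing the forward direction. -/
def fwdEquiv (X : C) (v w : V) :
    (X ⟶ F.obj ((ihom v).obj w)) ≃ (X ⟶ (ihom (F.obj v)).obj (F.obj w)) where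
  toFun f := (eqB L F adjLF X v w).symm (e.hom.app (X, v) ≫ eqA L F adjLF X v w f)
  invFun g := (eqA L F adjLF X v w).symm (e.inv.app (X, v) ≫ eqB L F adjLF X v w g)
  left_inv f := by simp
  right_inv g := by simp

lemma fwdEquiv_apply (X : C) (v w : V) (f : X ⟶ F.obj ((ihom v).obj w)) :
    fwdEquiv L F adjLF e X v w f =
      (eqB L F adjLF X v w).symm (e.hom.app (X, v) ≫ eqA L F adjLF X v w f) := rfl

lemma fwd_nat_X {X X' : C} (u : X' ⟶ X) (v w : V) (f : X ⟶ F.obj ((ihom v).obj w)) :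
    fwdEquiv L F adjLF e X' v w (u ≫ f) = u ≫ fwdEquiv L F adjLF e X v w f := by
  simp only [fwdEquiv_apply]
  apply (eqB L F adjLF X' v w).injective
  rw [Equiv.apply_symm_apply, eqB_nat_X, Equiv.apply_symm_apply,
    eqA_nat_X, ← Category.assoc, ← e_nat_X L F e, Category.assoc]

lemma fwd_nat_vw (X : C) {v v' w w' : V} (h : v' ⟶ v) (k : w ⟶ w')
    (f : X ⟶ F.obj ((ihom v).obj w)) :
    fwdEquiv L F adjLF e X v' w' (f ≫ F.map ((pre h).app w ≫ (ihom v').map k)) =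
      fwdEquiv L F adjLF e X v w f ≫
        ((pre (F.map h)).app (F.obj w) ≫ (ihom (F.obj v')).map (F.map k)) := by
  simp only [fwdEquiv_apply]
  apply (eqB L F adjLF X v' w').injective
  rw [Equiv.apply_symm_apply, Functor.map_comp, ← Category.assoc (f := f),
    eqA_nat_w, eqA_nat_v]
  conv_rhs => rw [← Category.assoc, eqB_nat_w, eqB_nat_v, Equiv.apply_symm_apply,
    ← Category.assoc, e_nat_v L F e]
  simp only [Category.assoc]

/-- Forward direction: F preserves exponentials. -/
def fwdIso : (Functor.uncurry.obj (MonoidalClosed.internalHom (C := V)) ⋙ F) ≅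
    (F.op.prod F ⋙ Functor.uncurry.obj (MonoidalClosed.internalHom (C := C))) :=
  (Yoneda.fullyFaithful.whiskeringRight (Vᵒᵖ × V)).preimageIso <|
    NatIso.ofComponents
      (fun vw => NatIso.ofComponents
        (fun X => Equiv.toIso (fwdEquiv L F adjLF e X.unop vw.1.unop vw.2))
        (by
          intro X X' u
          ext f
          exact fwd_nat_X L F adjLF e u.unop vw.1.unop vw.2 f))
      (by
        intro vw vw' φ
        ext X f
        exact fwd_nat_vw L F adjLF e X.unop φ.1.unop φ.2 f)

end Fwd

section Bwd

variable (i : (Functor.uncurry.obj (MonoidalClosed.internalHom (C := V)) ⋙ F) ≅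
    (F.op.prod F ⋙ Functor.uncurry.obj (MonoidalClosed.internalHom (C := C))))

lemma i_nat_v {v v' : V} (h : v' ⟶ v) (w : V) :
    F.map ((pre h).app w) ≫ i.hom.app (Opposite.op v', w) =
      i.hom.app (Opposite.op v, w) ≫ (pre (F.map h)).app (F.obj w) := by
  have := i.hom.naturality ((h.op, 𝟙 w) : ((Opposite.op v : Vᵒᵖ), w) ⟶ (Opposite.op v', w))
  simpa [internalHom] using this

lemma i_nat_w (v : V) {w w' : V} (k : w ⟶ w') :
    F.map ((ihom v).map k) ≫ i.hom.app (Opposite.op v, w') =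
      i.hom.app (Opposite.op v, w) ≫ (ihom (F.obj v)).map (F.map k) := by
  have := i.hom.naturality ((𝟙 (Opposite.op v), k) : ((Opposite.op v : Vᵒᵖ), w) ⟶ (Opposite.op v, w'))
  simpa [internalHom] using this

/-- The full hom-set equivalence implementing the backward direction. -/
def bwdEquiv (X : C) (v w : V) :
    (L.obj (X ⊗ F.obj v) ⟶ w) ≃ (L.obj X ⊗ v ⟶ w) where
  toFun f := eqA L F adjLF X v w
    ((eqB L F adjLF X v w).symm f ≫ i.inv.app (Opposite.op v, w))
  invFun g := eqB L F adjLF X v w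
    ((eqA L F adjLF X v w).symm g ≫ i.hom.app (Opposite.op v, w))
  left_inv f := by
    simp only [Equiv.symm_apply_apply]
    erw [Category.assoc, Iso.inv_hom_id_app, Category.comp_id]
    simp
  right_inv g := by
    simp only [Equiv.symm_apply_apply]
    erw [Category.assoc, Iso.hom_inv_id_app, Category.comp_id]
    simp

lemma bwdEquiv_symm_apply (X : C) (v w : V) (g : L.obj X ⊗ v ⟶ w) :
    (bwdEquiv L F adjLF i X v w).symm g =
      eqB L F adjLF X v w ((eqA L F adjLF X v w).symm g ≫ i.hom.app (Opposite.op v, w)) := rfl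

lemma bwd_nat_w (X : C) (v : V) {w w' : V} (k : w ⟶ w') (g : L.obj X ⊗ v ⟶ w) :
    (bwdEquiv L F adjLF i X v w').symm (g ≫ k) =
      (bwdEquiv L F adjLF i X v w).symm g ≫ k := by
  simp only [bwdEquiv_symm_apply]
  erw [eqA_symm_nat_w, Category.assoc, i_nat_w F i, ← Category.assoc, eqB_nat_w]
  rfl

lemma bwd_nat_Xv {X X' : C} {v v' : V} (u : X' ⟶ X) (h : v' ⟶ v) (w : V)
    (g : L.obj X ⊗ v ⟶ w) :
    (bwdEquiv L F adjLF i X' v' w).symm ((L.map u ⊗ₘ h) ≫ g) =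
      L.map (u ⊗ₘ F.map h) ≫ (bwdEquiv L F adjLF i X v w).symm g := by
  simp only [bwdEquiv_symm_apply]
  rw [MonoidalCategory.tensorHom_def, Category.assoc, eqA_symm_nat_X, eqA_symm_nat_v]
  erw [Category.assoc (f := u), Category.assoc (f := (eqA L F adjLF X v w).symm g), i_nat_v F i,
    ← Category.assoc (f := (eqA L F adjLF X v w).symm g),
    eqB_nat_X, eqB_nat_v, MonoidalCategory.tensorHom_def, Functor.map_comp, Category.assoc]
  exact (Category.assoc _ _ _).symm

/-- Backward direction: the Frobenius natural isomorphism. -/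
def bwdIso : ((𝟭 C).prod F ⋙ MonoidalCategory.tensor C ⋙ L) ≅
    (L.prod (𝟭 V) ⋙ MonoidalCategory.tensor V) :=
  NatIso.removeOp
    ((Coyoneda.fullyFaithful.whiskeringRight ((C × V)ᵒᵖ)).preimageIso
      (X := (L.prod (𝟭 V) ⋙ MonoidalCategory.tensor V).op)
      (Y := ((𝟭 C).prod F ⋙ MonoidalCategory.tensor C ⋙ L).op) <|
      NatIso.ofComponents
        (fun Xv => NatIso.ofComponents
          (fun w => Equiv.toIso
            ((bwdEquiv L F adjLF i Xv.unop.1 Xv.unop.2 w).symm))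
          (by
            intro w w' k
            ext f
            exact bwd_nat_w L F adjLF i Xv.unop.1 Xv.unop.2 k f))
        (by
          intro Xv Xv' φ
          ext w f
          exact bwd_nat_Xv L F adjLF i φ.unop.1 φ.unop.2 w f))

end Bwd

end FrobAux

end FrobAux

/-- Suppose `L ⊣ F ⊣ R : C → V` with `C` and `V` cartesian closed.
Then there is a natural isomorphism `L (X × F V) ≅ L X × V` (the Frobenius law for
`L ⊣ F`) if and only if there is a natural isomorphism `F (V ⟹ W) ≅ F V ⟹ F W`
(`F` preserves exponentials). -/
theorem statement2 {C : Type u₁} [Category.{v₁} C] {V : Type u₂} [Category.{v₂} V]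
    [CartesianMonoidalCategory C] [CartesianMonoidalCategory V]
    [MonoidalClosed C] [MonoidalClosed V]
    (L : C ⥤ V) (F : V ⥤ C) (R : C ⥤ V) (adjLF : L ⊣ F) (adjFR : F ⊣ R) :
    Nonempty (((𝟭 C).prod F ⋙ MonoidalCategory.tensor C ⋙ L) ≅
        (L.prod (𝟭 V) ⋙ MonoidalCategory.tensor V)) ↔
    Nonempty ((Functor.uncurry.obj (MonoidalClosed.internalHom (C := V)) ⋙ F) ≅
        (F.op.prod F ⋙ Functor.uncurry.obj (MonoidalClosed.internalHom (C := C)))) := by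
  constructor
  · rintro ⟨e⟩
    exact ⟨FrobAux.fwdIso L F adjLF e⟩
  · rintro ⟨i⟩
    exact ⟨FrobAux.bwdIso L F adjLF i⟩
end

section
/- Suppose L ⊣ F ⊣ R : C → V with C and V cartesian closed. Then the Frobenius law L(X × FV) ≅ LX × V holds naturally if and only if there is a natural isomorphism R(X ⟹ FV) ≅ LX ⟹ V. -/
open CategoryTheory CategoryTheory.Limits MonoidalCategory

universe v₁ v₂ u₁ u₂

noncomputable section

namespace Statement3Aux

open CartesianClosed

section CurryPre

variable {C : Type u₁} [Category.{v₁} C] [CartesianMonoidalCategory C] [MonoidalClosed C]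

lemma curry_whiskerRight_comp {A B Y Z : C} [Closed A] [Closed B]
    (f : B ⟶ A) (g : A ⊗ Y ⟶ Z) :
    MonoidalClosed.curry (f ▷ Y ≫ g) = MonoidalClosed.curry g ≫ (MonoidalClosed.pre f).app Z := by
  apply MonoidalClosed.uncurry_injective
  rw [MonoidalClosed.uncurry_curry, MonoidalClosed.uncurry_eq,
    MonoidalCategory.whiskerLeft_comp, Category.assoc, MonoidalClosed.id_tensor_pre_app_comp_ev,
    ← Category.assoc, whisker_exchange, Category.assoc, ← MonoidalClosed.uncurry_eq,
    MonoidalClosed.uncurry_curry]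

/-- `curry` as an `Equiv`, stated so goals mention `MonoidalClosed.curry` syntactically. -/
@[simps]
def curryEquiv (A : C) [Closed A] (Y X : C) : (A ⊗ Y ⟶ X) ≃ (Y ⟶ A ⟹ X) where
  toFun := MonoidalClosed.curry
  invFun := MonoidalClosed.uncurry
  left_inv f := MonoidalClosed.uncurry_curry f
  right_inv f := MonoidalClosed.curry_uncurry f

end CurryPre

section Yon

variable {A : Type u₁} [Category.{v₁} A] {B : Type u₂} [Category.{v₂} B]

lemma nonempty_iso_iff_coyoneda (G G' : A ⥤ B) :
    Nonempty (G ≅ G') ↔ Nonempty (G.op ⋙ coyoneda ≅ G'.op ⋙ coyoneda) := by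
  constructor
  · rintro ⟨i⟩
    exact ⟨Functor.isoWhiskerRight (NatIso.op i.symm) coyoneda⟩
  · rintro ⟨i⟩
    exact ⟨(NatIso.removeOp ((Coyoneda.fullyFaithful.whiskeringRight _).preimageIso i)).symm⟩

lemma nonempty_iso_iff_yoneda (G G' : A ⥤ B) :
    Nonempty (G ≅ G') ↔ Nonempty (G ⋙ yoneda ≅ G' ⋙ yoneda) := by
  constructor
  · rintro ⟨i⟩
    exact ⟨Functor.isoWhiskerRight i yoneda⟩
  · rintro ⟨i⟩
    exact ⟨(Yoneda.fullyFaithful.whiskeringRight _).preimageIso i⟩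

end Yon

section Uncur

variable {A : Type u₁} [Category.{v₁} A] {B : Type u₂} [Category.{v₂} B]
  {E : Type*} [Category E]

lemma nonempty_iso_iff_uncurry (G G' : A ⥤ B ⥤ E) :
    Nonempty (G ≅ G') ↔ Nonempty (Functor.uncurry.obj G ≅ Functor.uncurry.obj G') := by
  constructor
  · rintro ⟨i⟩
    exact ⟨Functor.uncurry.mapIso i⟩
  · rintro ⟨i⟩
    exact ⟨Functor.currying.unitIso.app G ≪≫ Functor.curry.mapIso i ≪≫
      (Functor.currying.unitIso.app G').symm⟩

lemma nonempty_iso_iff_whisker_equiv {A' : Type*} [Category A'] (e : A ≌ A')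
    (G G' : A' ⥤ B) :
    Nonempty (G ≅ G') ↔ Nonempty (e.functor ⋙ G ≅ e.functor ⋙ G') := by
  constructor
  · rintro ⟨i⟩
    exact ⟨Functor.isoWhiskerLeft e.functor i⟩
  · rintro ⟨i⟩
    exact ⟨(e.invFunIdAssoc G).symm ≪≫ Functor.isoWhiskerLeft e.inverse i ≪≫ e.invFunIdAssoc G'⟩

end Uncur

section Main

variable {C : Type u₁} [Category.{v₁} C] {V : Type u₂} [Category.{v₂} V]
  [CartesianMonoidalCategory C] [CartesianMonoidalCategory V]
  [MonoidalClosed C] [MonoidalClosed V]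
  (L : C ⥤ V) (F : V ⥤ C) (R : C ⥤ V) (adjLF : L ⊣ F) (adjFR : F ⊣ R)

/-- The reshuffling equivalence `(C × V)ᵒᵖ × V ≌ (Cᵒᵖ × V) × Vᵒᵖ`. -/
@[simps]
def shuffle : ((C × V)ᵒᵖ × V) ⥤ ((Cᵒᵖ × V) × Vᵒᵖ) where
  obj p := ((Opposite.op p.1.unop.1, p.2), Opposite.op p.1.unop.2)
  map f := ((f.1.unop.1.op, f.2), f.1.unop.2.op)

@[simps]
def shuffleInv : ((Cᵒᵖ × V) × Vᵒᵖ) ⥤ ((C × V)ᵒᵖ × V) where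
  obj p := (Opposite.op (p.1.1.unop, p.2.unop), p.1.2)
  map {X Y} f := ((show (Y.1.1.unop, Y.2.unop) ⟶ (X.1.1.unop, X.2.unop) from
    (f.1.1.unop, f.2.unop)).op, f.1.2)

def shuffleEquiv : ((C × V)ᵒᵖ × V) ≌ ((Cᵒᵖ × V) × Vᵒᵖ) where
  functor := shuffle
  inverse := shuffleInv
  unitIso := NatIso.ofComponents (fun _ => Iso.refl _)
    (fun f => by simp only [Functor.id_map, Iso.refl_hom, Category.comp_id, Category.id_comp]; ext <;> simp [shuffle, shuffleInv])
  counitIso := NatIso.ofComponents (fun _ => Iso.refl _)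
    (fun f => by simp only [Functor.id_map, Iso.refl_hom, Category.comp_id, Category.id_comp]; ext <;> simp [shuffle, shuffleInv])
  functor_unitIso_comp := fun X => by ext <;> simp [shuffle, shuffleInv]

/-- Frobenius side, as a Type-valued bifunctor iso with the exponential side. -/
def kappa2 :
    Functor.uncurry.obj ((L.prod (𝟭 V) ⋙ MonoidalCategory.tensor V).op ⋙ coyoneda) ≅
      shuffle ⋙ Functor.uncurry.obj ((L.op.prod (𝟭 V) ⋙ Functor.uncurry.obj (MonoidalClosed.internalHom (C := V))) ⋙ yoneda) :=
  NatIso.ofComponents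
    (fun p => Equiv.toIso (curryEquiv (L.obj p.1.unop.1) p.1.unop.2 p.2))
    (by
      rintro ⟨p, w⟩ ⟨p', w'⟩ ⟨fop, h⟩
      ext k
      dsimp [MonoidalClosed.internalHom, shuffle, Equiv.toIso_hom_hom_apply, curryEquiv_apply,
        Equiv.trans_apply]
      simp only [Equiv.toIso_hom_hom_apply, curryEquiv_apply, Equiv.trans_apply]
      rw [Category.assoc, MonoidalCategory.tensorHom_def, Category.assoc, curry_whiskerRight_comp,
        MonoidalClosed.curry_natural_left, MonoidalClosed.curry_natural_right,
        Category.assoc, Category.assoc, NatTrans.naturality])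

def kappa1 :
    Functor.uncurry.obj (((𝟭 C).prod F ⋙ MonoidalCategory.tensor C ⋙ L).op ⋙ coyoneda) ≅
      shuffle ⋙ Functor.uncurry.obj
        (((𝟭 Cᵒᵖ).prod F ⋙ Functor.uncurry.obj (MonoidalClosed.internalHom (C := C)) ⋙ R) ⋙ yoneda) :=
  NatIso.ofComponents
    (fun p => Equiv.toIso ((adjLF.homEquiv _ _).trans
      ((curryEquiv p.1.unop.1 _ _).trans (adjFR.homEquiv _ _))))
    (by
      rintro ⟨p, w⟩ ⟨p', w'⟩ ⟨fop, h⟩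
      ext k
      dsimp [MonoidalClosed.internalHom, shuffle, Equiv.toIso_hom_hom_apply, curryEquiv_apply,
        Equiv.trans_apply]
      simp only [Equiv.toIso_hom_hom_apply, curryEquiv_apply, Equiv.trans_apply]
      rw [Category.assoc, Adjunction.homEquiv_naturality_left,
        Adjunction.homEquiv_naturality_right, MonoidalCategory.tensorHom_def, Category.assoc,
        curry_whiskerRight_comp, MonoidalClosed.curry_natural_left,
        MonoidalClosed.curry_natural_right, Category.assoc, Category.assoc,
        NatTrans.naturality, Adjunction.homEquiv_naturality_left,
        Adjunction.homEquiv_naturality_right, Functor.map_comp])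

end Main

end Statement3Aux

end

/-- Suppose `L ⊣ F ⊣ R : C → V` with `C` and `V` cartesian closed.
Then the Frobenius law `L (X × F V) ≅ L X × V` holds naturally if and only if there is
a natural isomorphism `R (X ⟹ F V) ≅ L X ⟹ V`. -/
theorem statement3 {C : Type u₁} [Category.{v₁} C] {V : Type u₂} [Category.{v₂} V]
    [CartesianMonoidalCategory C] [CartesianMonoidalCategory V]
    [MonoidalClosed C] [MonoidalClosed V]
    (L : C ⥤ V) (F : V ⥤ C) (R : C ⥤ V) (adjLF : L ⊣ F) (adjFR : F ⊣ R) :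
    Nonempty (((𝟭 C).prod F ⋙ MonoidalCategory.tensor C ⋙ L) ≅
        (L.prod (𝟭 V) ⋙ MonoidalCategory.tensor V)) ↔
    Nonempty (((𝟭 Cᵒᵖ).prod F ⋙ Functor.uncurry.obj (MonoidalClosed.internalHom (C := C)) ⋙ R) ≅
        (L.op.prod (𝟭 V) ⋙ Functor.uncurry.obj (MonoidalClosed.internalHom (C := V)))) := by
  open Statement3Aux in
  rw [(nonempty_iso_iff_coyoneda _ _).trans (nonempty_iso_iff_uncurry _ _),
    (nonempty_iso_iff_yoneda _ _).trans ((nonempty_iso_iff_uncurry _ _).trans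
      (nonempty_iso_iff_whisker_equiv (shuffleEquiv (C := C) (V := V)) _ _))]
  constructor
  · rintro ⟨i⟩
    exact ⟨(kappa1 L F R adjLF adjFR).symm ≪≫ i ≪≫ kappa2 L⟩
  · rintro ⟨i⟩
    exact ⟨kappa1 L F R adjLF adjFR ≪≫ i ≪≫ (kappa2 L).symm⟩
end

section
/- Given adjunctions L ⊣ F ⊣ R : C → V with F fully faithful and C cartesian closed, V is cartesian closed, with products given by V ×_V W := R(FV ×_C FW) and exponentials given by V ⟹_V W := R(FV ⟹_C FW). -/
open CategoryTheory CategoryTheory.Limits MonoidalCategory CartesianClosed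

universe v₁ v₂ u₁ u₂

noncomputable section Statement4Aux

namespace Statement4Aux

open CartesianMonoidalCategory SemiCartesianMonoidalCategory

variable {C : Type u₁} [Category.{v₁} C] {V : Type u₂} [Category.{v₂} V]
    [CartesianMonoidalCategory C]
    (F : V ⥤ C) (R : C ⥤ V) (adjFR : F ⊣ R)
    [F.Full] [F.Faithful]

/-- The chosen product cone on `R (F v ⊗ F w)`. -/
def prodCone (v w : V) : BinaryFan v w :=
  BinaryFan.mk (P := R.obj (F.obj v ⊗ F.obj w))
    (R.map (fst _ _) ≫ inv (adjFR.unit.app v))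
    (R.map (snd _ _) ≫ inv (adjFR.unit.app w))

def prodConeIsLimit (v w : V) : IsLimit (prodCone F R adjFR v w) :=
  BinaryFan.isLimitMk
    (fun s => adjFR.homEquiv _ _ (lift (F.map s.fst) (F.map s.snd)))
    (fun s => by
      rw [Adjunction.homEquiv_unit, Category.assoc, ← R.map_comp_assoc, lift_fst]
      have h := adjFR.unit.naturality s.fst
      dsimp at h
      exact (Category.assoc _ _ _).symm.trans ((IsIso.comp_inv_eq _).mpr h.symm))
    (fun s => by
      rw [Adjunction.homEquiv_unit, Category.assoc, ← R.map_comp_assoc, lift_snd]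
      have h := adjFR.unit.naturality s.snd
      dsimp at h
      exact (Category.assoc _ _ _).symm.trans ((IsIso.comp_inv_eq _).mpr h.symm))
    (fun s m h1 h2 => by
      apply (adjFR.homEquiv _ _).symm.injective
      rw [Equiv.symm_apply_apply, Adjunction.homEquiv_counit]
      apply CartesianMonoidalCategory.hom_ext
      · rw [Category.assoc]
        have hnat : adjFR.counit.app (F.obj v ⊗ F.obj w) ≫ fst _ _ =
            F.map (R.map (fst (F.obj v) (F.obj w))) ≫ adjFR.counit.app (F.obj v) :=
          (adjFR.counit.naturality (fst (F.obj v) (F.obj w))).symm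
        rw [hnat, lift_fst, ← Category.assoc, ← F.map_comp]
        have h1' : m ≫ R.map (fst (F.obj v) (F.obj w)) = s.fst ≫ adjFR.unit.app v := by
          have hu : inv (adjFR.unit.app v) ≫ adjFR.unit.app v = 𝟙 _ := IsIso.inv_hom_id _
          simp only [← h1]
          exact (((Category.assoc _ _ _).trans (congrArg (_ ≫ ·) ((Category.assoc _ _ _).trans
            ((congrArg (_ ≫ ·) hu).trans (Category.comp_id _))))).symm)
        rw [h1']
        exact (congrArg (· ≫ adjFR.counit.app (F.obj v)) (F.map_comp _ _)).trans
          ((Category.assoc _ _ _).trans ((congrArg (_ ≫ ·)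
            (adjFR.left_triangle_components v)).trans (Category.comp_id _)))
      · rw [Category.assoc]
        have hnat : adjFR.counit.app (F.obj v ⊗ F.obj w) ≫ snd _ _ =
            F.map (R.map (snd (F.obj v) (F.obj w))) ≫ adjFR.counit.app (F.obj w) :=
          (adjFR.counit.naturality (snd (F.obj v) (F.obj w))).symm
        rw [hnat, lift_snd, ← Category.assoc, ← F.map_comp]
        have h2' : m ≫ R.map (snd (F.obj v) (F.obj w)) = s.snd ≫ adjFR.unit.app w := by
          have hu : inv (adjFR.unit.app w) ≫ adjFR.unit.app w = 𝟙 _ := IsIso.inv_hom_id _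
          simp only [← h2]
          exact (((Category.assoc _ _ _).trans (congrArg (_ ≫ ·) ((Category.assoc _ _ _).trans
            ((congrArg (_ ≫ ·) hu).trans (Category.comp_id _))))).symm)
        rw [h2']
        exact (congrArg (· ≫ adjFR.counit.app (F.obj w)) (F.map_comp _ _)).trans
          ((Category.assoc _ _ _).trans ((congrArg (_ ≫ ·)
            (adjFR.left_triangle_components w)).trans (Category.comp_id _))))

def termIsTerminal : IsTerminal (R.obj (𝟙_ C)) :=
  IsTerminal.ofUniqueHom (fun X => adjFR.homEquiv _ _ (toUnit _))
    (fun X m => (adjFR.homEquiv _ _).symm.injective (toUnit_unique _ _))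

/-- The chosen finite products on `V`. -/
def cfp : CartesianMonoidalCategory V :=
  CartesianMonoidalCategory.ofChosenFiniteProducts ⟨_, termIsTerminal F R adjFR⟩
    (fun v w => ⟨_, prodConeIsLimit F R adjFR v w⟩)

section CC

variable [MonoidalClosed C] (L : C ⥤ V) (adjLF : L ⊣ F) [CartesianMonoidalCategory V]

/-- `L (F v ⊗ F -) ≅ v ⊗ -`. -/
def tensorIso (v : V) : (F ⋙ tensorLeft (F.obj v)) ⋙ L ≅ tensorLeft v :=
  letI : PreservesLimitsOfSize.{0, 0} F := adjLF.rightAdjoint_preservesLimits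
  NatIso.ofComponents
    (fun u => L.mapIso (asIso (CartesianMonoidalCategory.prodComparison F v u)).symm ≪≫ asIso (adjLF.counit.app (v ⊗ u)))
    (fun {u u'} f => by
      letI : ∀ a b : V, IsIso (CartesianMonoidalCategory.prodComparison F a b) := fun a b => by infer_instance
      have hc : L.map (F.map (v ◁ f)) ≫ adjLF.counit.app (v ⊗ u') =
          adjLF.counit.app (v ⊗ u) ≫ (v ◁ f) := adjLF.counit.naturality (v ◁ f)
      simp only [Functor.comp_obj, Functor.comp_map, curriedTensor_obj_obj, curriedTensor_obj_map,
        Iso.trans_hom, Functor.mapIso_symm, Iso.symm_hom, Functor.mapIso_inv,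
        prodComparisonIso_hom, asIso_hom, Category.assoc]
      rw [← hc, ← Category.assoc, ← Category.assoc, ← L.map_comp, ← L.map_comp]
      congr 2
      rw [asIso_inv, asIso_inv, prodComparison_inv_natural_whiskerLeft])

/-- Cartesian closed structure on `V`. -/
def cc : MonoidalClosed V where
  closed v :=
    { rightAdj := F ⋙ ihom (F.obj v) ⋙ R
      adj := ((adjFR.comp (ihom.adjunction (F.obj v))).comp adjLF).ofNatIsoLeft
        (tensorIso F L adjLF v) }

end CC

end Statement4Aux

end Statement4Aux

open Statement4Aux in
/-- Given adjunctions `L ⊣ F ⊣ R : C → V` with `F` fully faithful and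
`C` cartesian closed, `V` is cartesian closed, with products given by
`V × W := R (F V × F W)` and exponentials given by `V ⟹ W := R (F V ⟹ F W)`. -/
theorem statement4 {C : Type u₁} [Category.{v₁} C] {V : Type u₂} [Category.{v₂} V]
    [CartesianMonoidalCategory C] [MonoidalClosed C]
    (L : C ⥤ V) (F : V ⥤ C) (R : C ⥤ V) (adjLF : L ⊣ F) (adjFR : F ⊣ R)
    [F.Full] [F.Faithful] :
    ∃ cfp : CartesianMonoidalCategory V,
      letI := cfp
      (∀ v w : V, Nonempty ((v ⊗ w) ≅ R.obj (F.obj v ⊗ F.obj w))) ∧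
      ∃ _cc : MonoidalClosed V,
        ∀ v w : V, Nonempty ((v ⟹ w) ≅ R.obj (F.obj v ⟹ F.obj w)) := by
  letI i : CartesianMonoidalCategory V := cfp F R adjFR
  exact ⟨i, fun v w => ⟨Iso.refl _⟩, cc F R adjFR L adjLF, fun v w => ⟨Iso.refl _⟩⟩
end

section
/- Given adjunctions L ⊣ F ⊣ R : C → V with F fully faithful and C cartesian closed, the following are equivalent: (1) L(X × FV) ≅ L(FLX × FV) naturally (induced by the unit of L ⊣ F); (2) FV ⟹ FW ≅ FR(FV ⟹ FW) naturally (induced by the counit of F ⊣ R); (3) R(X ⟹ FV) ≅ R(FLX ⟹ FV) naturally. -/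
open CategoryTheory CategoryTheory.Limits MonoidalCategory

universe v₁ v₂ u₁ u₂

variable {C : Type u₁} [Category.{v₁} C] {V : Type u₂} [Category.{v₂} V]
    [CartesianMonoidalCategory C] [CartesianMonoidalCategory V]
    [MonoidalClosed C] [MonoidalClosed V]

/-- The canonical map `L (X × F V) ⟶ L (F L X × F V)` induced by the unit of `L ⊣ F`. -/
def frobUnitMap (L : C ⥤ V) (F : V ⥤ C) (adjLF : L ⊣ F) :
    ((𝟭 C).prod F ⋙ MonoidalCategory.tensor C ⋙ L) ⟶
      ((L ⋙ F).prod F ⋙ MonoidalCategory.tensor C ⋙ L) :=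
  Functor.whiskerRight (Functor.whiskerRight (NatTrans.prod adjLF.unit (𝟙 F)) (MonoidalCategory.tensor C)) L

/-- The canonical map `F R (F V ⟹ F W) ⟶ (F V ⟹ F W)` induced by the counit of `F ⊣ R`. -/
def expCounitMap (F : V ⥤ C) (R : C ⥤ V) (adjFR : F ⊣ R) :
    ((F.op.prod F ⋙ Functor.uncurry.obj (MonoidalClosed.internalHom (C := C))) ⋙ (R ⋙ F)) ⟶
      ((F.op.prod F ⋙ Functor.uncurry.obj (MonoidalClosed.internalHom (C := C))) ⋙ 𝟭 C) :=
  Functor.whiskerLeft (F.op.prod F ⋙ Functor.uncurry.obj (MonoidalClosed.internalHom (C := C))) adjFR.counit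

/-- The canonical map `R (F L X ⟹ F V) ⟶ R (X ⟹ F V)` induced by the unit of `L ⊣ F`. -/
def expUnitMap (L : C ⥤ V) (F : V ⥤ C) (R : C ⥤ V) (adjLF : L ⊣ F) :
    ((L ⋙ F).op.prod F ⋙ Functor.uncurry.obj (MonoidalClosed.internalHom (C := C)) ⋙ R) ⟶
      ((𝟭 C).op.prod F ⋙ Functor.uncurry.obj (MonoidalClosed.internalHom (C := C)) ⋙ R) :=
  Functor.whiskerRight (Functor.whiskerRight (NatTrans.prod (NatTrans.op adjLF.unit) (𝟙 F))
    (Functor.uncurry.obj (MonoidalClosed.internalHom (C := C)))) R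

/-! ### Auxiliary lemmas -/

section Aux

attribute [local instance] BraidedCategory.ofCartesianMonoidalCategory

lemma bij_conj {α β γ δ : Sort*} (e1 : α ≃ γ) (e2 : β ≃ δ) (f : α → β) (g : γ → δ)
    (h : ∀ a, e2 (f a) = g (e1 a)) : Function.Bijective f ↔ Function.Bijective g := by
  constructor
  · intro hf
    have hg : g = e2 ∘ f ∘ e1.symm := by
      funext c
      simp only [Function.comp_apply, h (e1.symm c), Equiv.apply_symm_apply]
    rw [hg]
    exact e2.bijective.comp (hf.comp e1.symm.bijective)
  · intro hgb
    have hf : f = e2.symm ∘ g ∘ e1 := by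
      funext a
      simp only [Function.comp_apply, ← h a, Equiv.symm_apply_apply]
    rw [hf]
    exact e2.symm.bijective.comp (hgb.comp e1.bijective)

/-- Post-composition with an isomorphism, as an equivalence of hom-sets. -/
def postCompEquiv {D : Type*} [Category D] {Z A B : D} (i : A ≅ B) : (Z ⟶ A) ≃ (Z ⟶ B) where
  toFun f := f ≫ i.hom
  invFun f := f ≫ i.inv
  left_inv f := by simp
  right_inv f := by simp

/-- An object is in the essential image of `F` iff it is "local" with respect to the
unit of the reflection `L ⊣ F`. -/
lemma localBij_iff_essImage (L : C ⥤ V) (F : V ⥤ C) (adjLF : L ⊣ F)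
    [F.Full] [F.Faithful] (A : C) :
    (∀ X : C, Function.Bijective
      (fun g : F.obj (L.obj X) ⟶ A => adjLF.unit.app X ≫ g)) ↔ F.essImage A := by
  constructor
  · intro h
    obtain ⟨r, hr'⟩ := (h A).2 (𝟙 A)
    have hr : adjLF.unit.app A ≫ r = 𝟙 A := hr'
    obtain ⟨e', he'⟩ := F.map_surjective (r ≫ adjLF.unit.app A)
    have hL1 : L.map (adjLF.unit.app A) ≫ L.map r = 𝟙 (L.obj A) := by
      rw [← L.map_comp, hr]
      exact L.map_id A
    have hL : L.map (F.map e') = 𝟙 _ := by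
      rw [he', L.map_comp, IsIso.eq_inv_of_hom_inv_id hL1, IsIso.inv_hom_id]
    have he : e' = 𝟙 (L.obj A) := by
      have hn := adjLF.counit.naturality e'
      dsimp at hn
      rw [hL, Category.id_comp] at hn
      calc e' = inv (adjLF.counit.app (L.obj A)) ≫ (adjLF.counit.app (L.obj A) ≫ e') := by
              simp
        _ = inv (adjLF.counit.app (L.obj A)) ≫ adjLF.counit.app (L.obj A) := by rw [← hn]
        _ = 𝟙 (L.obj A) := by simp
    haveI : IsIso (adjLF.unit.app A) :=
      ⟨r, hr, by rw [← he', he]; exact F.map_id _⟩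
    exact adjLF.mem_essImage_of_unit_isIso A
  · rintro ⟨B, ⟨i⟩⟩ X
    have ff := Functor.FullyFaithful.ofFullyFaithful F
    have key : Function.Bijective
        (fun g : F.obj (L.obj X) ⟶ F.obj B => adjLF.unit.app X ≫ g) := by
      have heq : (fun g : F.obj (L.obj X) ⟶ F.obj B => adjLF.unit.app X ≫ g)
          = (adjLF.homEquiv X B) ∘ (ff.homEquiv (X := L.obj X) (Y := B)).symm := by
        funext g
        simp [Adjunction.homEquiv_unit]
      rw [heq]
      exact (adjLF.homEquiv X B).bijective.comp (ff.homEquiv).symm.bijective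
    refine (bij_conj (postCompEquiv i) (postCompEquiv i) _ _ ?_).mp key
    intro a
    simp [postCompEquiv]

/-- Currying combined with the braiding: `Hom(A ⊗ B, W) ≃ Hom(A, B ⟹ W)`. -/
def braidCurryEquiv (A B W : C) : (A ⊗ B ⟶ W) ≃ (A ⟶ B ⟶[C] W) where
  toFun f := MonoidalClosed.curry ((β_ B A).hom ≫ f)
  invFun g := (β_ B A).inv ≫ MonoidalClosed.uncurry g
  left_inv f := by simp
  right_inv g := by simp

lemma braidCurryEquiv_nat {X Y B W : C} (θ : X ⟶ Y) (f : Y ⊗ B ⟶ W) :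
    braidCurryEquiv X B W ((θ ▷ B) ≫ f) = θ ≫ braidCurryEquiv Y B W f := by
  dsimp [braidCurryEquiv]
  rw [← Category.assoc, ← BraidedCategory.braiding_naturality_right, Category.assoc,
    MonoidalClosed.curry_natural_left]

lemma uncurry_comp_pre {X Y T W : C} (θ : X ⟶ Y) (t : T ⟶ Y ⟶[C] W) :
    MonoidalClosed.uncurry (t ≫ (MonoidalClosed.pre θ).app W)
      = (θ ▷ T) ≫ MonoidalClosed.uncurry t := by
  rw [MonoidalClosed.uncurry_natural_left, MonoidalClosed.uncurry_pre,
    MonoidalClosed.uncurry_eq, ← Category.assoc, whisker_exchange, Category.assoc]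

/-- The "Frobenius" bijectivity condition, a hom-set reformulation of statement (1). -/
def FrobCond (L : C ⥤ V) (F : V ⥤ C) (adjLF : L ⊣ F) : Prop :=
  ∀ (X : C) (v w : V), Function.Bijective
    (fun f : F.obj (L.obj X) ⊗ F.obj v ⟶ F.obj w => (adjLF.unit.app X ▷ F.obj v) ≫ f)

/-- The condition that internal homs between objects of the subcategory stay in the
subcategory. -/
def ImgCond (F : V ⥤ C) : Prop :=
  ∀ v w : V, F.essImage (F.obj v ⟶[C] F.obj w)

lemma frobCond_iff_imgCond (L : C ⥤ V) (F : V ⥤ C) (adjLF : L ⊣ F)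
    [F.Full] [F.Faithful] : FrobCond L F adjLF ↔ ImgCond F := by
  constructor
  · intro h v w
    rw [← localBij_iff_essImage L F adjLF]
    intro X
    exact (bij_conj (braidCurryEquiv _ _ _) (braidCurryEquiv _ _ _) _ _
      (fun a => braidCurryEquiv_nat _ a)).mp (h X v w)
  · intro h X v w
    exact (bij_conj (braidCurryEquiv _ _ _) (braidCurryEquiv _ _ _) _ _
      (fun a => braidCurryEquiv_nat _ a)).mpr
      (((localBij_iff_essImage L F adjLF _).mpr (h v w)) X)

lemma frobUnitMap_app (L : C ⥤ V) (F : V ⥤ C) (adjLF : L ⊣ F) (X : C) (v : V) :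
    (frobUnitMap L F adjLF).app (X, v) = L.map (adjLF.unit.app X ▷ F.obj v) := by
  simp [frobUnitMap, MonoidalCategory.tensor]

lemma frob_iff_frobCond (L : C ⥤ V) (F : V ⥤ C) (adjLF : L ⊣ F) :
    IsIso (frobUnitMap L F adjLF) ↔ FrobCond L F adjLF := by
  rw [NatTrans.isIso_iff_isIso_app]
  constructor
  · intro h X v w
    have h1 := h (X, v)
    rw [frobUnitMap_app, isIso_iff_coyoneda_map_bijective] at h1
    exact (bij_conj (adjLF.homEquiv _ _) (adjLF.homEquiv _ _) _ _
      (fun a => adjLF.homEquiv_naturality_left _ a)).mp (h1 w)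
  · rintro h ⟨X, v⟩
    rw [frobUnitMap_app, isIso_iff_coyoneda_map_bijective]
    intro T
    exact (bij_conj (adjLF.homEquiv _ _) (adjLF.homEquiv _ _) _ _
      (fun a => adjLF.homEquiv_naturality_left _ a)).mpr (h X v T)

lemma expCounit_iff_imgCond (F : V ⥤ C) (R : C ⥤ V) (adjFR : F ⊣ R)
    [F.Full] [F.Faithful] :
    IsIso (expCounitMap F R adjFR) ↔ ImgCond F := by
  rw [NatTrans.isIso_iff_isIso_app]
  constructor
  · intro h v w
    have h1 := h (Opposite.op v, w)
    exact (adjFR.isIso_counit_app_iff_mem_essImage).mp h1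
  · intro h p
    exact (adjFR.isIso_counit_app_iff_mem_essImage (X := F.obj p.1.unop ⟶[C] F.obj p.2)).mpr
      (h p.1.unop p.2)

lemma expUnitMap_app (L : C ⥤ V) (F : V ⥤ C) (R : C ⥤ V) (adjLF : L ⊣ F) (X : C) (v : V) :
    (expUnitMap L F R adjLF).app (Opposite.op X, v)
      = R.map ((MonoidalClosed.pre (adjLF.unit.app X)).app (F.obj v)) := by
  simp [expUnitMap, Functor.uncurry]
  rfl

lemma expUnit_iff_frobCond (L : C ⥤ V) (F : V ⥤ C) (R : C ⥤ V)
    (adjLF : L ⊣ F) (adjFR : F ⊣ R) :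
    IsIso (expUnitMap L F R adjLF) ↔ FrobCond L F adjLF := by
  rw [NatTrans.isIso_iff_isIso_app]
  have key : ∀ (X : C) (v : V),
      IsIso (R.map ((MonoidalClosed.pre (adjLF.unit.app X)).app (F.obj v)))
        ↔ ∀ T : V, Function.Bijective
          (fun f : F.obj (L.obj X) ⊗ F.obj T ⟶ F.obj v =>
            (adjLF.unit.app X ▷ F.obj T) ≫ f) := by
    intro X v
    rw [isIso_iff_yoneda_map_bijective]
    constructor
    · intro h1 T
      have h2 := (bij_conj ((adjFR.homEquiv T _).symm) ((adjFR.homEquiv T _).symm) _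
        (fun t => t ≫ (MonoidalClosed.pre (adjLF.unit.app X)).app (F.obj v))
        (fun a => adjFR.homEquiv_naturality_right_symm a _)).mp (h1 T)
      exact (bij_conj (((ihom.adjunction _).homEquiv _ _).symm)
        (((ihom.adjunction _).homEquiv _ _).symm) _ _
        (fun a => uncurry_comp_pre _ a)).mp h2
    · intro h1 T
      refine (bij_conj ((adjFR.homEquiv T _).symm) ((adjFR.homEquiv T _).symm) _
        (fun t => t ≫ (MonoidalClosed.pre (adjLF.unit.app X)).app (F.obj v))
        (fun a => adjFR.homEquiv_naturality_right_symm a _)).mpr ?_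
      exact (bij_conj (((ihom.adjunction _).homEquiv _ _).symm)
        (((ihom.adjunction _).homEquiv _ _).symm) _ _
        (fun a => uncurry_comp_pre _ a)).mpr (h1 T)
  constructor
  · intro h X v w
    have h1 : IsIso (R.map ((MonoidalClosed.pre (adjLF.unit.app X)).app (F.obj w))) := by
      have h0 := h (Opposite.op X, w)
      rw [expUnitMap_app] at h0
      exact h0
    exact ((key X w).mp h1 v) 
  · rintro h ⟨X, v⟩
    induction X using Opposite.rec with
    | op X =>
      rw [expUnitMap_app]
      exact (key X v).mpr (fun T => h X T v)

end Aux

/-- Given `L ⊣ F ⊣ R : C → V` with `F` fully faithful and `C`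
cartesian closed, the following are equivalent: (1) `L (X × F V) ≅ L (F L X × F V)`
naturally (induced by the unit of `L ⊣ F`); (2) `F V ⟹ F W ≅ F R (F V ⟹ F W)`
naturally (induced by the counit of `F ⊣ R`); (3) `R (X ⟹ F V) ≅ R (F L X ⟹ F V)`
naturally (induced by the unit of `L ⊣ F`). -/
theorem statement5 (L : C ⥤ V) (F : V ⥤ C) (R : C ⥤ V)
    (adjLF : L ⊣ F) (adjFR : F ⊣ R) [F.Full] [F.Faithful] :
    (IsIso (frobUnitMap L F adjLF) ↔ IsIso (expCounitMap F R adjFR)) ∧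
    (IsIso (frobUnitMap L F adjLF) ↔ IsIso (expUnitMap L F R adjLF)) := by
  
  have h1 := frob_iff_frobCond L F adjLF
  have h2 := frobCond_iff_imgCond L F adjLF
  have h3 := expCounit_iff_imgCond F R adjFR
  have h4 := expUnit_iff_frobCond L F R adjLF adjFR
  exact ⟨(h1.trans h2).trans h3.symm, h1.trans h4.symm⟩
end

section
/- In a hyperdoctrine with Frobenius reciprocity, for f : X → Y, a point y : 1 → Y, and P ∈ PX, there are natural isomorphisms y*(Π_f P) ≅ hom_X(f*{y}, P) and y*(Σ_f P) ≅ meets_X(f*{y}, P), where {y} := Σ_y ⊤_1. -/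
noncomputable section

open CategoryTheory CategoryTheory.Limits MonoidalCategory

universe v₂ u₂ v u

/-- A hyperdoctrine (with Frobenius reciprocity): an indexed category `⟨P X ; X ∈ C⟩`
over a category `C` with terminal object, with each `P X` cartesian closed and each
substitution functor `f* : P Y ⥤ P X` having left and right adjoints `Σ_f ⊣ f* ⊣ Π_f`,
and satisfying Frobenius reciprocity `Σ_f (P × f* Q) ≅ Σ_f P × Q` naturally. -/
structure Hyperdoctrine (C : Type u) [Category.{v} C] [HasTerminal C] where
  P : C → Type u₂
  [cat : ∀ X, Category.{v₂} (P X)]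
  [cfp : ∀ X, CartesianMonoidalCategory (P X)]
  [cc : ∀ X, MonoidalClosed (P X)]
  sub : ∀ {X Y : C}, (X ⟶ Y) → (P Y ⥤ P X)
  subId : ∀ X : C, sub (𝟙 X) ≅ 𝟭 (P X)
  subComp : ∀ {X Y Z : C} (f : X ⟶ Y) (g : Y ⟶ Z), sub (f ≫ g) ≅ sub g ⋙ sub f
  sigma : ∀ {X Y : C}, (X ⟶ Y) → (P X ⥤ P Y)
  sigmaAdj : ∀ {X Y : C} (f : X ⟶ Y), sigma f ⊣ sub f
  pi : ∀ {X Y : C}, (X ⟶ Y) → (P X ⥤ P Y)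
  piAdj : ∀ {X Y : C} (f : X ⟶ Y), sub f ⊣ pi f
  frobenius : ∀ {X Y : C} (f : X ⟶ Y),
    Nonempty (((𝟭 (P X)).prod (sub f) ⋙ MonoidalCategory.tensor (P X) ⋙ sigma f) ≅
      ((sigma f).prod (𝟭 (P Y)) ⋙ MonoidalCategory.tensor (P Y)))

namespace Hyperdoctrine

attribute [instance] Hyperdoctrine.cat Hyperdoctrine.cfp Hyperdoctrine.cc

variable {C : Type u} [Category.{v} C] [HasTerminal C] (H : Hyperdoctrine.{v₂, u₂} C)

/-- The `P 1`-valued hom functor `hom_X (P, Q) := Π_X (P ⟹ Q)`. -/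
def homFunctor (X : C) : (H.P X)ᵒᵖ × H.P X ⥤ H.P (⊤_ C) :=
  Functor.uncurry.obj (MonoidalClosed.internalHom (C := H.P X)) ⋙ H.pi (terminal.from X)

/-- The `P 1`-valued "meets" functor `meets_X (P, Q) := Σ_X (P × Q)`. -/
def meetsFunctor (X : C) : H.P X × H.P X ⥤ H.P (⊤_ C) :=
  MonoidalCategory.tensor (H.P X) ⋙ H.sigma (terminal.from X)

end Hyperdoctrine

namespace Statement10Aux

open Hyperdoctrine

/-- Fixing the first argument of a bifunctor. -/
def fixFst {A : Type*} {B : Type*} [Category A] [Category B] (a : A) : B ⥤ A × B :=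
  ((Functor.const B).obj a).prod' (𝟭 B)

/-- Fixing the second argument of a bifunctor. -/
def fixSnd {A : Type*} {B : Type*} [Category A] [Category B] (b : B) : A ⥤ A × B :=
  (𝟭 A).prod' ((Functor.const A).obj b)

/-- The braiding as a natural isomorphism `A ⊗ - ≅ - ⊗ A`. -/
def tensorLR {D : Type*} [Category D] [CartesianMonoidalCategory D] (A : D) :
    tensorLeft A ≅ tensorRight A :=
  letI := BraidedCategory.ofCartesianMonoidalCategory (C := D)
  NatIso.ofComponents (fun Q => β_ A Q) (by intros; simp)

variable {C : Type u} [Category.{v} C] [HasTerminal C] (H : Hyperdoctrine.{v₂, u₂} C)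

/-- `Σ` is (pseudo)functorial: `Σ_{f ≫ g} ≅ Σ_g ∘ Σ_f`. -/
def sigmaComp {X Y Z : C} (f : X ⟶ Y) (g : Y ⟶ Z) :
    H.sigma (f ≫ g) ≅ H.sigma f ⋙ H.sigma g :=
  (H.sigmaAdj (f ≫ g)).leftAdjointUniq
    (((H.sigmaAdj f).comp (H.sigmaAdj g)).ofNatIsoRight (H.subComp f g).symm)

/-- `Σ_{𝟙} ≅ 𝟭`. -/
def sigmaId (X : C) : H.sigma (𝟙 X) ≅ 𝟭 (H.P X) :=
  (H.sigmaAdj (𝟙 X)).leftAdjointUniq (Adjunction.id.ofNatIsoRight (H.subId X).symm)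

/-- Frobenius reciprocity with the second argument fixed:
`Σ_f (- ⊗ f* R) ≅ Σ_f - ⊗ R`. -/
def frobSnd {X Y : C} (f : X ⟶ Y) (R : H.P Y) :
    tensorRight ((H.sub f).obj R) ⋙ H.sigma f ≅ H.sigma f ⋙ tensorRight R := by
  refine ?e1.symm ≪≫ Functor.isoWhiskerLeft (fixSnd R) (H.frobenius f).some ≪≫ ?e2
  case e1 =>
    exact NatIso.ofComponents (fun Q => Iso.refl _)
      (by intro Q Q' g; dsimp [fixSnd]; simp [tensorHom_id])
  case e2 =>
    exact NatIso.ofComponents (fun Q => Iso.refl _)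
      (by intro Q Q' g; dsimp [fixSnd]; simp [tensorHom_id])

/-- Frobenius reciprocity with the first argument fixed to the unit:
`Σ_y (y* -) ≅ Σ_y ⊤ ⊗ -`. -/
def frobUnit {Z Y : C} (y : Z ⟶ Y) :
    H.sub y ⋙ H.sigma y ≅ tensorLeft ((H.sigma y).obj (𝟙_ (H.P Z))) := by
  refine ?e1.symm ≪≫ Functor.isoWhiskerLeft (fixFst (𝟙_ (H.P Z))) (H.frobenius y).some ≪≫ ?e2
  case e1 =>
    exact NatIso.ofComponents (fun R => (H.sigma y).mapIso (λ_ ((H.sub y).obj R)).symm)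
      (by
        intro R R' g
        dsimp [fixFst]
        simp [← Functor.map_comp, id_tensorHom])
  case e2 =>
    exact NatIso.ofComponents (fun R => Iso.refl _)
      (by intro R R' g; dsimp [fixFst]; simp [id_tensorHom])

end Statement10Aux

open Hyperdoctrine Statement10Aux in
/-- In a hyperdoctrine with Frobenius reciprocity, for `f : X ⟶ Y`,
a point `y : 1 ⟶ Y`, and `P ∈ P X`, there are natural isomorphisms
`y* (Π_f P) ≅ hom_X (f* {y}, P)` and `y* (Σ_f P) ≅ meets_X (f* {y}, P)`,
where `{y} := Σ_y ⊤_1`. -/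
theorem statement10 {C : Type u} [Category.{v} C] [HasTerminal C]
    (H : Hyperdoctrine.{v₂, u₂} C) {X Y : C} (f : X ⟶ Y) (y : ⊤_ C ⟶ Y) :
    Nonempty ((H.pi f ⋙ H.sub y) ≅
        (ihom ((H.sub f).obj ((H.sigma y).obj (𝟙_ (H.P (⊤_ C))))) ⋙
          H.pi (terminal.from X))) ∧
    Nonempty ((H.sigma f ⋙ H.sub y) ≅
        (tensorLeft ((H.sub f).obj ((H.sigma y).obj (𝟙_ (H.P (⊤_ C))))) ⋙
          H.sigma (terminal.from X))) := by
  set Sy : H.P Y := (H.sigma y).obj (𝟙_ (H.P (⊤_ C))) with hSy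
  set A : H.P X := (H.sub f).obj Sy with hA
  have hy : y ≫ terminal.from Y = 𝟙 (⊤_ C) := Subsingleton.elim _ _
  have hf : f ≫ terminal.from Y = terminal.from X := Subsingleton.elim _ _
  haveI : PreservesLimitsOfSize.{0, 0} (H.sub f) :=
    (H.sigmaAdj f).rightAdjoint_preservesLimits
  -- `{y}`-decomposition of `Σ_y`:  `Σ_y ≅ t_Y* ⋙ (Sy ⊗ -)`
  have sigYdecomp : H.sigma y ≅ H.sub (terminal.from Y) ⋙ tensorLeft Sy :=
    (Functor.leftUnitor _).symm ≪≫
      Functor.isoWhiskerRight ((eqToIso (congrArg H.sub hy) ≪≫ H.subId _).symm) (H.sigma y) ≪≫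
      Functor.isoWhiskerRight (H.subComp y (terminal.from Y)) (H.sigma y) ≪≫
      Functor.associator _ _ _ ≪≫
      Functor.isoWhiskerLeft (H.sub (terminal.from Y)) (frobUnit H y)
  -- Key iso `K : Σ_y ⋙ f* ≅ t_X* ⋙ (A ⊗ -)`
  have K : H.sigma y ⋙ H.sub f ≅ H.sub (terminal.from X) ⋙ tensorLeft A :=
    Functor.isoWhiskerRight sigYdecomp (H.sub f) ≪≫
      Functor.associator _ _ _ ≪≫
      Functor.isoWhiskerLeft (H.sub (terminal.from Y))
        (CartesianMonoidalCategory.prodComparisonNatIso (H.sub f) Sy) ≪≫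
      (Functor.associator _ _ _).symm ≪≫
      Functor.isoWhiskerRight (H.subComp f (terminal.from Y)).symm (tensorLeft A) ≪≫
      Functor.isoWhiskerRight (eqToIso (congrArg H.sub hf)) (tensorLeft A)
  -- Key iso `L : (A ⊗ -) ⋙ Σ_{t_X} ≅ Σ_f ⋙ y*`
  have L : tensorLeft A ⋙ H.sigma (terminal.from X) ≅ H.sigma f ⋙ H.sub y :=
    Functor.isoWhiskerLeft (tensorLeft A) (eqToIso (congrArg H.sigma hf.symm)) ≪≫
      Functor.isoWhiskerLeft (tensorLeft A) (sigmaComp H f (terminal.from Y)) ≪≫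
      Functor.isoWhiskerRight (tensorLR A) (H.sigma f ⋙ H.sigma (terminal.from Y)) ≪≫
      (Functor.associator _ _ _).symm ≪≫
      Functor.isoWhiskerRight (frobSnd H f Sy) (H.sigma (terminal.from Y)) ≪≫
      Functor.associator _ _ _ ≪≫
      Functor.isoWhiskerLeft (H.sigma f)
        (Functor.isoWhiskerRight (tensorLR Sy).symm (H.sigma (terminal.from Y))) ≪≫
      Functor.isoWhiskerLeft (H.sigma f)
        (Functor.isoWhiskerRight (frobUnit H y).symm (H.sigma (terminal.from Y))) ≪≫
      Functor.isoWhiskerLeft (H.sigma f) (Functor.associator _ _ _) ≪≫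
      Functor.isoWhiskerLeft (H.sigma f)
        (Functor.isoWhiskerLeft (H.sub y) (sigmaComp H y (terminal.from Y)).symm) ≪≫
      Functor.isoWhiskerLeft (H.sigma f)
        (Functor.isoWhiskerLeft (H.sub y) (eqToIso (congrArg H.sigma hy))) ≪≫
      Functor.isoWhiskerLeft (H.sigma f) (Functor.isoWhiskerLeft (H.sub y) (sigmaId H (⊤_ C))) ≪≫
      Functor.isoWhiskerLeft (H.sigma f) (Functor.rightUnitor (H.sub y))
  constructor
  · exact ⟨Adjunction.rightAdjointUniq
      (((H.sigmaAdj y).comp (H.piAdj f)).ofNatIsoLeft K)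
      ((H.piAdj (terminal.from X)).comp (ihom.adjunction A))⟩
  · exact ⟨L.symm⟩
end
end

section
/- In a temporal doctrine, each mixed Frobenius law is equivalent to its exponential form: the natural isomorphism ⋄_X(P × i'_X N) ≅ ⋄_X(i_X ⋄_X P × i'_X N) holds if and only if the canonical map i'_X N ⟹ i_X M → i_X □_X(i'_X N ⟹ i_X M) is an isomorphism (equivalently, iff □'_X(P ⟹ i_X M) ≅ □'_X(i_X ⋄_X P ⟹ i_X M)). -/
noncomputable section

open CategoryTheory CategoryTheory.Limits MonoidalCategory
open CartesianClosed

universe v₁ v₂ v₃ u₁ u₂ u₃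

variable {P : Type u₁} [Category.{v₁} P] {M : Type u₂} [Category.{v₂} M]
  {M' : Type u₃} [Category.{v₃} M']
  [CartesianMonoidalCategory P] [MonoidalClosed P]

/-- The canonical comparison map `⋄(Q × i' N) ⟶ ⋄(i ⋄ Q × i' N)` induced by the unit
of `⋄ ⊣ i`; the mixed Frobenius law says it is an isomorphism. -/
def mixedFrobMap (i : M ⥤ P) (i' : M' ⥤ P) (dm : P ⥤ M) (adj : dm ⊣ i) :
    ((𝟭 P).prod i' ⋙ MonoidalCategory.tensor P ⋙ dm) ⟶
      ((dm ⋙ i).prod i' ⋙ MonoidalCategory.tensor P ⋙ dm) :=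
  Functor.whiskerRight (Functor.whiskerRight (NatTrans.prod adj.unit (𝟙 i')) (MonoidalCategory.tensor P)) dm

/-- The canonical comparison map `□'(i ⋄ Q ⟹ i L) ⟶ □'(Q ⟹ i L)` induced by the unit
of `⋄ ⊣ i`. -/
def mixedFrobExpMap (i : M ⥤ P) (i' : M' ⥤ P) (dm : P ⥤ M) (sq' : P ⥤ M')
    (adj : dm ⊣ i) :
    ((dm ⋙ i).op.prod i ⋙ Functor.uncurry.obj (MonoidalClosed.internalHom (C := P)) ⋙ sq') ⟶
      ((𝟭 P).op.prod i ⋙ Functor.uncurry.obj (MonoidalClosed.internalHom (C := P)) ⋙ sq') :=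
  Functor.whiskerRight (Functor.whiskerRight (NatTrans.prod (NatTrans.op adj.unit) (𝟙 i))
    (Functor.uncurry.obj (MonoidalClosed.internalHom (C := P)))) sq'

/-! ### Auxiliary lemmas -/

attribute [local instance] BraidedCategory.ofCartesianMonoidalCategory

open CartesianClosed

/-- Transfer bijectivity across a commuting square of equivalences. -/
lemma bij_transfer {α β α' β' : Sort*} (e₁ : α ≃ α') (e₂ : β ≃ β') (f : α → β) (g : α' → β')
    (h : ∀ a, e₂ (f a) = g (e₁ a)) : Function.Bijective f ↔ Function.Bijective g := by
  have hg : g = (e₂ : β → β') ∘ f ∘ (e₁.symm : α' → α) := by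
    funext a'
    simp only [Function.comp_apply, h, Equiv.apply_symm_apply]
  have hf : f = (e₂.symm : β' → β) ∘ g ∘ (e₁ : α → α') := by
    funext a
    simp only [Function.comp_apply, ← h, Equiv.symm_apply_apply]
  constructor
  · intro hbf
    rw [hg]
    exact e₂.bijective.comp (hbf.comp e₁.symm.bijective)
  · intro hbg
    rw [hf]
    exact e₂.symm.bijective.comp (hbg.comp e₁.bijective)

section UnitBij

variable (i : M ⥤ P) (dm : P ⥤ M) (adjDm : dm ⊣ i) [i.Full] [i.Faithful]

/-- Precomposition with the unit is bijective on maps into `E` iff the unit is an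
isomorphism at `E`. -/
lemma unit_bij_iff (E : P) :
    (∀ Q : P, Function.Bijective
      (fun g : i.obj (dm.obj Q) ⟶ E => adjDm.unit.app Q ≫ g)) ↔
      IsIso (adjDm.unit.app E) := by
  constructor
  · intro h
    obtain ⟨r, hr⟩ := (h E).2 (𝟙 E)
    simp only [] at hr
    -- hr : adjDm.unit.app E ≫ r = 𝟙 E
    have hnat : r ≫ adjDm.unit.app E
        = adjDm.unit.app (i.obj (dm.obj E)) ≫ i.map (dm.map r) := by
      simpa using adjDm.unit.naturality r
    have hdm : IsIso (dm.map r) := by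
      have : dm.map (adjDm.unit.app E) ≫ dm.map r = 𝟙 _ := by
        rw [← dm.map_comp, hr]; simp
      have : IsIso (dm.map (adjDm.unit.app E) ≫ dm.map r) := by rw [this]; infer_instance
      exact IsIso.of_isIso_comp_left (dm.map (adjDm.unit.app E)) (dm.map r)
    have hro : IsIso (r ≫ adjDm.unit.app E) := by
      rw [hnat]
      infer_instance
    have hre : r ≫ adjDm.unit.app E = 𝟙 _ := by
      rw [← cancel_epi (r ≫ adjDm.unit.app E)]
      simp [reassoc_of% hr]
    exact ⟨r, hr, hre⟩
  · intro hE Q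
    constructor
    · intro g₁ g₂ hg
      simp only [] at hg
      have hd : dm.map g₁ = dm.map g₂ := by
        have : dm.map (adjDm.unit.app Q) ≫ dm.map g₁
            = dm.map (adjDm.unit.app Q) ≫ dm.map g₂ := by
          rw [← dm.map_comp, ← dm.map_comp, hg]
        exact (cancel_epi (dm.map (adjDm.unit.app Q))).1 this
      have h₁ : g₁ ≫ adjDm.unit.app E
          = adjDm.unit.app (i.obj (dm.obj Q)) ≫ i.map (dm.map g₁) := by
        simpa using adjDm.unit.naturality g₁
      have h₂ : g₂ ≫ adjDm.unit.app E
          = adjDm.unit.app (i.obj (dm.obj Q)) ≫ i.map (dm.map g₂) := by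
        simpa using adjDm.unit.naturality g₂
      rw [← cancel_mono (adjDm.unit.app E), h₁, h₂, hd]
    · intro h
      refine ⟨i.map (dm.map h) ≫ inv (adjDm.unit.app E), ?_⟩
      simp only []
      have := adjDm.unit.naturality h
      simp only [Functor.id_obj, Functor.id_map, Functor.comp_obj, Functor.comp_map] at this
      rw [← Category.assoc, ← this, Category.assoc, IsIso.hom_inv_id, Category.comp_id]

end UnitBij

section Frob

variable (i : M ⥤ P) (dm : P ⥤ M) (adjDm : dm ⊣ i)

/-- The hom equivalence `(⋄(X × A) ⟶ L) ≃ (X ⟶ A ⟹ i L)`. -/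
def frobEquiv (A X : P) (L : M) : (dm.obj (X ⊗ A) ⟶ L) ≃ (X ⟶ (A ⟹ i.obj L)) :=
  (adjDm.homEquiv _ _).trans
    { toFun := fun f => MonoidalClosed.curry ((β_ A X).hom ≫ f)
      invFun := fun g => (β_ A X).inv ≫ MonoidalClosed.uncurry g
      left_inv := fun f => by simp
      right_inv := fun g => by simp }

lemma frobEquiv_naturality (A Q : P) (L : M)
    (x : dm.obj (i.obj (dm.obj Q) ⊗ A) ⟶ L) :
    frobEquiv i dm adjDm A Q L (dm.map (adjDm.unit.app Q ⊗ₘ 𝟙 A) ≫ x)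
      = adjDm.unit.app Q ≫ frobEquiv i dm adjDm A (i.obj (dm.obj Q)) L x := by
  dsimp only [frobEquiv, Equiv.trans_apply, Equiv.coe_fn_mk]
  rw [Adjunction.homEquiv_naturality_left, tensorHom_id,
    ← BraidedCategory.braiding_naturality_right_assoc, MonoidalClosed.curry_natural_left]
  rfl

lemma frob_isIso_iff (A Q : P) :
    IsIso (dm.map (adjDm.unit.app Q ⊗ₘ 𝟙 A)) ↔
      ∀ L : M, Function.Bijective
        (fun g : i.obj (dm.obj Q) ⟶ (A ⟹ i.obj L) => adjDm.unit.app Q ≫ g) := by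
  rw [isIso_iff_coyoneda_map_bijective]
  refine forall_congr' fun L => ?_
  exact bij_transfer (frobEquiv i dm adjDm A (i.obj (dm.obj Q)) L)
    (frobEquiv i dm adjDm A Q L)
    (fun x => dm.map (adjDm.unit.app Q ⊗ₘ 𝟙 A) ≫ x)
    (fun g => adjDm.unit.app Q ≫ g)
    (frobEquiv_naturality i dm adjDm A Q L)

end Frob

section Exp

variable (i : M ⥤ P) (i' : M' ⥤ P) (dm : P ⥤ M) (sq' : P ⥤ M')
variable (adjDm : dm ⊣ i) (adjSq' : i' ⊣ sq')

lemma uncurry_comp_pre_app {A B X : P} (f : B ⟶ A) {Y : P} (g : Y ⟶ (A ⟹ X)) :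
    MonoidalClosed.uncurry (g ≫ (MonoidalClosed.pre f).app X) = (f ▷ Y) ≫ MonoidalClosed.uncurry g := by
  rw [MonoidalClosed.uncurry_eq, MonoidalClosed.uncurry_eq,
    MonoidalCategory.whiskerLeft_comp, Category.assoc, MonoidalClosed.id_tensor_pre_app_comp_ev,
    whisker_exchange_assoc]

/-- The hom equivalence `(N ⟶ □'(X ⟹ i L)) ≃ (X ⟶ i' N ⟹ i L)`. -/
def expEquiv (N : M') (X : P) (L : M) :
    (N ⟶ sq'.obj (X ⟹ i.obj L)) ≃ (X ⟶ (i'.obj N ⟹ i.obj L)) :=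
  (adjSq'.homEquiv N _).symm.trans
    { toFun := fun g =>
        MonoidalClosed.curry ((β_ (i'.obj N) X).hom ≫ MonoidalClosed.uncurry g)
      invFun := fun h =>
        MonoidalClosed.curry ((β_ X (i'.obj N)).hom ≫ MonoidalClosed.uncurry h)
      left_inv := fun g => by simp
      right_inv := fun h => by simp }

lemma expEquiv_naturality (N : M') (Q : P) (L : M)
    (u : N ⟶ sq'.obj (i.obj (dm.obj Q) ⟹ i.obj L)) :
    expEquiv i i' sq' adjSq' N Q L
        (u ≫ sq'.map ((MonoidalClosed.pre (adjDm.unit.app Q)).app (i.obj L)))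
      = adjDm.unit.app Q ≫ expEquiv i i' sq' adjSq' N (i.obj (dm.obj Q)) L u := by
  dsimp only [expEquiv, Equiv.trans_apply, Equiv.coe_fn_mk]
  rw [Adjunction.homEquiv_naturality_right_symm, uncurry_comp_pre_app,
    ← BraidedCategory.braiding_naturality_right_assoc, MonoidalClosed.curry_natural_left]

include adjSq' in
lemma exp_isIso_iff (Q : P) (L : M) :
    IsIso (sq'.map ((MonoidalClosed.pre (adjDm.unit.app Q)).app (i.obj L))) ↔
      ∀ N : M', Function.Bijective
        (fun g : i.obj (dm.obj Q) ⟶ (i'.obj N ⟹ i.obj L) => adjDm.unit.app Q ≫ g) := by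
  rw [isIso_iff_yoneda_map_bijective]
  refine forall_congr' fun N => ?_
  exact bij_transfer (expEquiv i i' sq' adjSq' N (i.obj (dm.obj Q)) L)
    (expEquiv i i' sq' adjSq' N Q L)
    (fun u => u ≫ sq'.map ((MonoidalClosed.pre (adjDm.unit.app Q)).app (i.obj L)))
    (fun g => adjDm.unit.app Q ≫ g)
    (expEquiv_naturality i i' dm sq' adjDm adjSq' N Q L)

end Exp

/-- In a temporal doctrine, each mixed Frobenius law is equivalent to
its exponential form: `⋄(Q × i' N) ≅ ⋄(i ⋄ Q × i' N)` (induced by the unit) is a natural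
isomorphism iff the counit map `i □ (i' N ⟹ i L) ⟶ (i' N ⟹ i L)` is an isomorphism
for all `N, L`, and equivalently iff `□'(i ⋄ Q ⟹ i L) ⟶ □'(Q ⟹ i L)` is a natural
isomorphism. -/
theorem statement11 (i : M ⥤ P) (i' : M' ⥤ P) [i.Full] [i.Faithful] [i'.Full] [i'.Faithful]
    (dm sq : P ⥤ M) (dm' sq' : P ⥤ M')
    (adjDm : dm ⊣ i) (adjSq : i ⊣ sq) (adjDm' : dm' ⊣ i') (adjSq' : i' ⊣ sq') :
    (IsIso (mixedFrobMap i i' dm adjDm) ↔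
      ∀ (N : M') (L : M), IsIso (adjSq.counit.app (i'.obj N ⟹ i.obj L))) ∧
    (IsIso (mixedFrobMap i i' dm adjDm) ↔
      IsIso (mixedFrobExpMap i i' dm sq' adjDm)) := by
  have h1 : IsIso (mixedFrobMap i i' dm adjDm) ↔
      ∀ (Q : P) (N : M') (L : M), Function.Bijective
        (fun g : i.obj (dm.obj Q) ⟶ (i'.obj N ⟹ i.obj L) => adjDm.unit.app Q ≫ g) := by
    rw [NatTrans.isIso_iff_isIso_app]
    constructor
    · intro h Q N L
      have hQN := h (Q, N)
      have happ : (mixedFrobMap i i' dm adjDm).app (Q, N)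
          = dm.map (adjDm.unit.app Q ⊗ₘ 𝟙 (i'.obj N)) := rfl
      rw [happ] at hQN
      exact (frob_isIso_iff i dm adjDm (i'.obj N) Q).1 hQN L
    · intro h X
      have : IsIso (dm.map (adjDm.unit.app X.1 ⊗ₘ 𝟙 (i'.obj X.2))) :=
        (frob_isIso_iff i dm adjDm (i'.obj X.2) X.1).2 (fun L => h X.1 X.2 L)
      exact this
  have happE : ∀ (X : Pᵒᵖ × M), (mixedFrobExpMap i i' dm sq' adjDm).app X
      = sq'.map ((MonoidalClosed.pre (adjDm.unit.app X.1.unop)).app (i.obj X.2)) := by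
    intro X
    have : (mixedFrobExpMap i i' dm sq' adjDm).app X
        = sq'.map ((MonoidalClosed.pre (adjDm.unit.app X.1.unop)).app (i.obj X.2)
            ≫ (ihom X.1.unop).map (𝟙 (i.obj X.2))) := rfl
    rw [this]
    simp
    rfl
  have h3 : IsIso (mixedFrobExpMap i i' dm sq' adjDm) ↔
      ∀ (Q : P) (N : M') (L : M), Function.Bijective
        (fun g : i.obj (dm.obj Q) ⟶ (i'.obj N ⟹ i.obj L) => adjDm.unit.app Q ≫ g) := by
    rw [NatTrans.isIso_iff_isIso_app]
    constructor
    · intro h Q N L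
      have hQL := h (Opposite.op Q, L)
      rw [happE] at hQL
      exact (exp_isIso_iff i i' dm sq' adjDm adjSq' Q L).1 hQL N
    · intro h X
      rw [happE X]
      exact (exp_isIso_iff i i' dm sq' adjDm adjSq' X.1.unop X.2).2
        (fun N => h X.1.unop N X.2)
  refine ⟨h1.trans ?_, h1.trans h3.symm⟩
  constructor
  · intro h N L
    haveI : IsIso (adjDm.unit.app (i'.obj N ⟹ i.obj L)) :=
      (unit_bij_iff i dm adjDm _).1 (fun Q => h Q N L)
    rw [adjSq.isIso_counit_app_iff_mem_essImage]
    exact adjDm.mem_essImage_of_unit_isIso _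
  · intro h Q N L
    haveI := h N L
    haveI : IsIso (adjDm.unit.app (i'.obj N ⟹ i.obj L)) :=
      (adjDm.isIso_unit_app_iff_mem_essImage).2 (adjSq.mem_essImage_of_counit_isIso _)
    exact (unit_bij_iff i dm adjDm _).2 this Q
end
end

section
/- In a temporal doctrine, if P is left closed (P ≅ i_X M) and Q is right closed (Q ≅ i'_X N), then the exponential P ⟹ Q in PX is right closed, i.e. the counit i'_X □'_X(P ⟹ Q) → (P ⟹ Q) is an isomorphism. -/
noncomputable section

open CategoryTheory CategoryTheory.Limits MonoidalCategory
open CategoryTheory.CartesianClosed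

universe v₁ v₂ v₃ u₁ u₂ u₃

variable {P : Type u₁} [Category.{v₁} P] {M : Type u₂} [Category.{v₂} M]
  {M' : Type u₃} [Category.{v₃} M']
  [CartesianMonoidalCategory P] [MonoidalClosed P]

section Aux

attribute [local instance] BraidedCategory.ofCartesianMonoidalCategory

variable (i : M ⥤ P) (i' : M' ⥤ P) (dm' : P ⥤ M') (adjDm' : dm' ⊣ i')
  (P₀ Q₀ : P) (M₀ : M) (N₀ : M') (hP : P₀ ≅ i.obj M₀) (hQ : Q₀ ≅ i'.obj N₀)

/-- Auxiliary translation: maps into the exponential correspond to maps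
`dm'(T ⊗ i M₀) ⟶ N₀`. -/
def auxE (T : P) : (T ⟶ (P₀ ⟹ Q₀)) → (dm'.obj (T ⊗ i.obj M₀) ⟶ N₀) := fun f =>
  (adjDm'.homEquiv _ N₀).symm
    ((β_ T (i.obj M₀)).hom ≫ (hP.inv ▷ T) ≫ MonoidalClosed.uncurry f ≫ hQ.hom)

lemma auxE_bijective (T : P) : Function.Bijective (auxE i i' dm' adjDm' P₀ Q₀ M₀ N₀ hP hQ T) := by
  have h : auxE i i' dm' adjDm' P₀ Q₀ M₀ N₀ hP hQ T =
      ⇑(adjDm'.homEquiv _ N₀).symm ∘ ⇑(hQ.homToEquiv) ∘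
        ⇑((asIso ((β_ T (i.obj M₀)).hom ≫ (hP.inv ▷ T))).homFromEquiv.symm) ∘
        ⇑(((ihom.adjunction P₀).homEquiv T Q₀).symm) := by
    funext f
    simp [auxE, Iso.homToEquiv, Iso.homFromEquiv, MonoidalClosed.uncurry]
  rw [h]
  exact ((adjDm'.homEquiv _ N₀).symm.bijective.comp
    ((hQ.homToEquiv).bijective.comp
      (((asIso ((β_ T (i.obj M₀)).hom ≫ (hP.inv ▷ T))).homFromEquiv.symm).bijective.comp
        (((ihom.adjunction P₀).homEquiv T Q₀).symm.bijective))))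

lemma auxE_natural {T T' : P} (u : T' ⟶ T) (f : T ⟶ (P₀ ⟹ Q₀)) :
    auxE i i' dm' adjDm' P₀ Q₀ M₀ N₀ hP hQ T' (u ≫ f) =
      dm'.map (u ▷ i.obj M₀) ≫ auxE i i' dm' adjDm' P₀ Q₀ M₀ N₀ hP hQ T f := by
  simp only [auxE, Adjunction.homEquiv_counit]
  rw [← Functor.map_comp_assoc]
  congr 2
  rw [MonoidalClosed.uncurry_natural_left]
  have hβ : (u ▷ i.obj M₀) ≫ (β_ T (i.obj M₀)).hom =
      (β_ T' (i.obj M₀)).hom ≫ (i.obj M₀ ◁ u) := by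
    simp
  rw [reassoc_of% hβ]
  simp only [Category.assoc]
  rw [← whisker_exchange_assoc]

end Aux

/-- In a temporal doctrine, if `P₀` is left closed (`P₀ ≅ i M₀`) and
`Q₀` is right closed (`Q₀ ≅ i' N₀`), then the exponential `P₀ ⟹ Q₀` is right closed,
i.e. the counit `i' □' (P₀ ⟹ Q₀) ⟶ (P₀ ⟹ Q₀)` is an isomorphism. -/
theorem statement12 (i : M ⥤ P) (i' : M' ⥤ P) [i.Full] [i.Faithful] [i'.Full] [i'.Faithful]
    (dm sq : P ⥤ M) (dm' sq' : P ⥤ M')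
    (adjDm : dm ⊣ i) (adjSq : i ⊣ sq) (adjDm' : dm' ⊣ i') (adjSq' : i' ⊣ sq')
    (mf : IsIso (mixedFrobMap i i' dm adjDm))
    (mf' : IsIso (mixedFrobMap i' i dm' adjDm'))
    (P₀ Q₀ : P) (M₀ : M) (N₀ : M') (hP : P₀ ≅ i.obj M₀) (hQ : Q₀ ≅ i'.obj N₀) :
    IsIso (adjSq'.counit.app (P₀ ⟹ Q₀)) := by
  apply isIso_of_yoneda_map_bijective
  intro T
  -- the Frobenius component is an isomorphism
  have hcomp : (mixedFrobMap i' i dm' adjDm').app (T, M₀) =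
      dm'.map (adjDm'.unit.app T ▷ i.obj M₀) := by
    simp [mixedFrobMap]
  have hfrobIso : IsIso (dm'.map (adjDm'.unit.app T ▷ i.obj M₀)) := by
    rw [← hcomp]; infer_instance
  -- precomposition with the unit is bijective on maps into the exponential
  have hunit : Function.Bijective
      (fun g : i'.obj (dm'.obj T) ⟶ (P₀ ⟹ Q₀) => adjDm'.unit.app T ≫ g) := by
    have hE := auxE_bijective i i' dm' adjDm' P₀ Q₀ M₀ N₀ hP hQ
    have hpre : Function.Bijective
        (fun h : dm'.obj (i'.obj (dm'.obj T) ⊗ i.obj M₀) ⟶ N₀ =>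
          dm'.map (adjDm'.unit.app T ▷ i.obj M₀) ≫ h) :=
      (asIso (dm'.map (adjDm'.unit.app T ▷ i.obj M₀))).homFromEquiv.symm.bijective
    have heq : (auxE i i' dm' adjDm' P₀ Q₀ M₀ N₀ hP hQ T) ∘
        (fun g : i'.obj (dm'.obj T) ⟶ (P₀ ⟹ Q₀) => adjDm'.unit.app T ≫ g) =
        (fun h => dm'.map (adjDm'.unit.app T ▷ i.obj M₀) ≫ h) ∘
          (auxE i i' dm' adjDm' P₀ Q₀ M₀ N₀ hP hQ _) := by
      funext g
      exact auxE_natural i i' dm' adjDm' P₀ Q₀ M₀ N₀ hP hQ _ g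
    have hcompBij : Function.Bijective ((auxE i i' dm' adjDm' P₀ Q₀ M₀ N₀ hP hQ T) ∘
        (fun g : i'.obj (dm'.obj T) ⟶ (P₀ ⟹ Q₀) => adjDm'.unit.app T ≫ g)) := by
      rw [heq]; exact hpre.comp (hE _)
    exact (Function.Bijective.of_comp_iff' (hE T) _).mp hcompBij
  -- decompose composition with the counit through the two adjunctions
  have hdecomp : (fun φ : T ⟶ i'.obj (sq'.obj (P₀ ⟹ Q₀)) =>
        φ ≫ adjSq'.counit.app (P₀ ⟹ Q₀)) =
      (fun g : i'.obj (dm'.obj T) ⟶ (P₀ ⟹ Q₀) => adjDm'.unit.app T ≫ g) ∘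
        (fun g : dm'.obj T ⟶ sq'.obj (P₀ ⟹ Q₀) =>
          i'.map g ≫ adjSq'.counit.app (P₀ ⟹ Q₀)) ∘
        (adjDm'.homEquiv T (sq'.obj (P₀ ⟹ Q₀))).symm := by
    funext φ
    simp only [Function.comp_apply]
    rw [← Category.assoc]
    congr 1
    conv_lhs => rw [← (adjDm'.homEquiv T (sq'.obj (P₀ ⟹ Q₀))).apply_symm_apply φ]
    rw [Adjunction.homEquiv_unit]
  have hmid : (fun g : dm'.obj T ⟶ sq'.obj (P₀ ⟹ Q₀) =>
      i'.map g ≫ adjSq'.counit.app (P₀ ⟹ Q₀)) =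
      ⇑(adjSq'.homEquiv (dm'.obj T) (P₀ ⟹ Q₀)).symm := by
    funext g
    rw [Adjunction.homEquiv_counit]
  have hbij : Function.Bijective
      ((fun g : i'.obj (dm'.obj T) ⟶ (P₀ ⟹ Q₀) => adjDm'.unit.app T ≫ g) ∘
        (fun g : dm'.obj T ⟶ sq'.obj (P₀ ⟹ Q₀) =>
          i'.map g ≫ adjSq'.counit.app (P₀ ⟹ Q₀)) ∘
        (adjDm'.homEquiv T (sq'.obj (P₀ ⟹ Q₀))).symm) := by
    refine hunit.comp (Function.Bijective.comp ?_
      (adjDm'.homEquiv T (sq'.obj (P₀ ⟹ Q₀))).symm.bijective)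
    rw [hmid]
    exact (adjSq'.homEquiv (dm'.obj T) (P₀ ⟹ Q₀)).symm.bijective
  exact hdecomp ▸ hbij
end
end

section
/- In a temporal doctrine, the restricted Frobenius law holds: ⋄_X(P × i_X j_X B) ≅ ⋄_X P ∧ j_X B naturally in P ∈ PX and B ∈ BX, where BX = MX ×_{PX} M'X is the category of bi-closed parts and ∧ is the product in MX. -/
noncomputable section

open CategoryTheory CategoryTheory.Limits MonoidalCategory

universe v₁ v₂ v₃ v₄ u₁ u₂ u₃ u₄

variable {P : Type u₁} [Category.{v₁} P] {M : Type u₂} [Category.{v₂} M]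
  {M' : Type u₃} [Category.{v₃} M'] {B : Type u₄} [Category.{v₄} B]
  [CartesianMonoidalCategory P] [MonoidalClosed P]

/-- In a temporal doctrine, the restricted Frobenius law holds:
`⋄(Q × i j B) ≅ ⋄ Q ∧ j B` naturally in `Q ∈ P` and `B ∈ B X`, where `B X` is the
category of bi-closed parts (with projections `j`, `j'` commuting over `P`) and
`∧ L M := ⋄(i L × i M)` is the product of `M X`. -/
theorem statement13 (i : M ⥤ P) (i' : M' ⥤ P) [i.Full] [i.Faithful] [i'.Full] [i'.Faithful]
    (dm sq : P ⥤ M) (dm' sq' : P ⥤ M')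
    (adjDm : dm ⊣ i) (adjSq : i ⊣ sq) (adjDm' : dm' ⊣ i') (adjSq' : i' ⊣ sq')
    (j : B ⥤ M) (j' : B ⥤ M') (jcomm : j ⋙ i ≅ j' ⋙ i')
    (mf : IsIso (mixedFrobMap i i' dm adjDm))
    (mf' : IsIso (mixedFrobMap i' i dm' adjDm')) :
    Nonempty (((𝟭 P).prod (j ⋙ i) ⋙ MonoidalCategory.tensor P ⋙ dm) ≅
      ((dm ⋙ i).prod (j ⋙ i) ⋙ MonoidalCategory.tensor P ⋙ dm)) := by
  refine ⟨?_⟩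
  calc ((𝟭 P).prod (j ⋙ i) ⋙ MonoidalCategory.tensor P ⋙ dm)
      ≅ ((𝟭 P).prod (j' ⋙ i') ⋙ MonoidalCategory.tensor P ⋙ dm) :=
        Functor.isoWhiskerRight (NatIso.prod (Iso.refl (𝟭 P)) jcomm) _
    _ ≅ ((𝟭 P).prod j') ⋙ ((𝟭 P).prod i' ⋙ MonoidalCategory.tensor P ⋙ dm) := Iso.refl _
    _ ≅ ((𝟭 P).prod j') ⋙ ((dm ⋙ i).prod i' ⋙ MonoidalCategory.tensor P ⋙ dm) :=
        Functor.isoWhiskerLeft _ (asIso (mixedFrobMap i i' dm adjDm))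
    _ ≅ ((dm ⋙ i).prod (j' ⋙ i') ⋙ MonoidalCategory.tensor P ⋙ dm) := Iso.refl _
    _ ≅ ((dm ⋙ i).prod (j ⋙ i) ⋙ MonoidalCategory.tensor P ⋙ dm) :=
        Functor.isoWhiskerRight (NatIso.prod (Iso.refl (dm ⋙ i)) jcomm.symm) _
end
end

section
/- In a weak temporal doctrine, the tensor-hom style law ten_X(f'•N, L) ≅ ten_Y(N, ∃_f L) holds naturally, where ten_X(N,M) := coend_X(i'_X N × i_X M) with coend_X := j_1^{-1} ⋄_1 Σ_X. -/
noncomputable section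

open CategoryTheory CategoryTheory.Limits MonoidalCategory

universe v₂ u₂ v u

/-- The internal-hom bifunctor `(L, M) ↦ (i L ⟹ i M)` defined on a full subcategory
`i : M ⥤ P` of exponentiable objects. -/
@[simps]
def expBifun {M : Type u} [Category.{v} M] {P : Type u₂} [Category.{v₂} P]
    [CartesianMonoidalCategory P] (i : M ⥤ P) (e : ∀ L : M, Closed (i.obj L)) :
    Mᵒᵖ × M ⥤ P where
  obj LM :=
    letI := e LM.1.unop
    (ihom (i.obj LM.1.unop)).obj (i.obj LM.2)
  map {A B} fg :=
    letI := e A.1.unop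
    letI := e B.1.unop
    (MonoidalClosed.pre (i.map fg.1.unop)).app (i.obj A.2) ≫ (ihom (i.obj B.1.unop)).map (i.map fg.2)
  map_id A := by
    letI := e A.1.unop
    simp
  map_comp {A B D} fg fg' := by
    letI := e A.1.unop
    letI := e B.1.unop
    letI := e D.1.unop
    simp only [prod_comp, unop_comp, Functor.map_comp, MonoidalClosed.pre_map, NatTrans.comp_app,
      Category.assoc]
    rw [(MonoidalClosed.pre (i.map fg'.1.unop)).naturality_assoc]

/-- A weak temporal doctrine: an indexed inclusion
`⟨i_X : M X → P X ← M' X : i'_X ; X ∈ C⟩` of reflective and coreflective subcategories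
of "left closed" and "right closed" parts, where the `P X` are cartesian with left and
right closed parts exponentiable, substitution `f*` has a left adjoint `Σ_f` satisfying
the Frobenius law, substitution on closed parts has both adjoints `∃_f ⊣ f• ⊣ ∀_f`
(with `∃_f ≅ ⋄_Y Σ_f i_X`), the mixed Frobenius laws hold, the two projections from the
truth-values category `B 1` are equivalences, and the comprehension adjunction
`c_X ⊣ k_X` has fully faithful right adjoint. -/
structure WeakTemporalDoctrine (C : Type u) [Category.{v} C] [HasTerminal C] where
  P : C → Type u₂
  M : C → Type u₂
  M' : C → Type u₂
  [catP : ∀ X, Category.{v₂} (P X)]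
  [catM : ∀ X, Category.{v₂} (M X)]
  [catM' : ∀ X, Category.{v₂} (M' X)]
  [cfpP : ∀ X, CartesianMonoidalCategory (P X)]
  [termM : ∀ X, HasTerminal (M X)]
  [termM' : ∀ X, HasTerminal (M' X)]
  i : ∀ X, M X ⥤ P X
  i' : ∀ X, M' X ⥤ P X
  [iFull : ∀ X, (i X).Full]
  [iFaithful : ∀ X, (i X).Faithful]
  [i'Full : ∀ X, (i' X).Full]
  [i'Faithful : ∀ X, (i' X).Faithful]
  expo : ∀ (X) (L : M X), Closed ((i X).obj L)
  expo' : ∀ (X) (N : M' X), Closed ((i' X).obj N)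
  dm : ∀ X, P X ⥤ M X
  sq : ∀ X, P X ⥤ M X
  dm' : ∀ X, P X ⥤ M' X
  sq' : ∀ X, P X ⥤ M' X
  dmAdj : ∀ X, dm X ⊣ i X
  sqAdj : ∀ X, i X ⊣ sq X
  dm'Adj : ∀ X, dm' X ⊣ i' X
  sq'Adj : ∀ X, i' X ⊣ sq' X
  sub : ∀ {X Y : C}, (X ⟶ Y) → (P Y ⥤ P X)
  subId : ∀ X : C, sub (𝟙 X) ≅ 𝟭 (P X)
  subComp : ∀ {X Y Z : C} (f : X ⟶ Y) (g : Y ⟶ Z), sub (f ≫ g) ≅ sub g ⋙ sub f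
  msub : ∀ {X Y : C}, (X ⟶ Y) → (M Y ⥤ M X)
  m'sub : ∀ {X Y : C}, (X ⟶ Y) → (M' Y ⥤ M' X)
  mcompat : ∀ {X Y : C} (f : X ⟶ Y), msub f ⋙ i X ≅ i Y ⋙ sub f
  m'compat : ∀ {X Y : C} (f : X ⟶ Y), m'sub f ⋙ i' X ≅ i' Y ⋙ sub f
  sigma : ∀ {X Y : C}, (X ⟶ Y) → (P X ⥤ P Y)
  sigmaAdj : ∀ {X Y : C} (f : X ⟶ Y), sigma f ⊣ sub f
  frobenius : ∀ {X Y : C} (f : X ⟶ Y),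
    Nonempty (((𝟭 (P X)).prod (sub f) ⋙ MonoidalCategory.tensor (P X) ⋙ sigma f) ≅
      ((sigma f).prod (𝟭 (P Y)) ⋙ MonoidalCategory.tensor (P Y)))
  fa : ∀ {X Y : C}, (X ⟶ Y) → (M X ⥤ M Y)
  faAdj : ∀ {X Y : C} (f : X ⟶ Y), msub f ⊣ fa f
  fa' : ∀ {X Y : C}, (X ⟶ Y) → (M' X ⥤ M' Y)
  fa'Adj : ∀ {X Y : C} (f : X ⟶ Y), m'sub f ⊣ fa' f
  ex : ∀ {X Y : C}, (X ⟶ Y) → (M X ⥤ M Y)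
  exAdj : ∀ {X Y : C} (f : X ⟶ Y), ex f ⊣ msub f
  exIso : ∀ {X Y : C} (f : X ⟶ Y), ex f ≅ i X ⋙ sigma f ⋙ dm Y
  ex' : ∀ {X Y : C}, (X ⟶ Y) → (M' X ⥤ M' Y)
  ex'Adj : ∀ {X Y : C} (f : X ⟶ Y), ex' f ⊣ m'sub f
  ex'Iso : ∀ {X Y : C} (f : X ⟶ Y), ex' f ≅ i' X ⋙ sigma f ⋙ dm' Y
  mixedFrob : ∀ X : C,
    Nonempty (((𝟭 (P X)).prod (i' X) ⋙ MonoidalCategory.tensor (P X) ⋙ dm X) ≅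
      ((dm X ⋙ i X).prod (i' X) ⋙ MonoidalCategory.tensor (P X) ⋙ dm X))
  mixedFrob' : ∀ X : C,
    Nonempty (((𝟭 (P X)).prod (i X) ⋙ MonoidalCategory.tensor (P X) ⋙ dm' X) ≅
      ((dm' X ⋙ i' X).prod (i X) ⋙ MonoidalCategory.tensor (P X) ⋙ dm' X))
  Bone : Type u₂
  [catB : Category.{v₂} Bone]
  j : Bone ⥤ M (⊤_ C)
  j' : Bone ⥤ M' (⊤_ C)
  jcomm : j ⋙ i (⊤_ C) ≅ j' ⋙ i' (⊤_ C)
  [jEquiv : j.IsEquivalence]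
  [j'Equiv : j'.IsEquivalence]
  c : ∀ X : C, Over X ⥤ P X
  k : ∀ X : C, P X ⥤ Over X
  compAdj : ∀ X : C, c X ⊣ k X
  cIso : ∀ (X : C) (u : Over X), (c X).obj u ≅ (sigma u.hom).obj (𝟙_ (P u.left))
  kCounitIso : ∀ X : C, IsIso (compAdj X).counit

namespace WeakTemporalDoctrine

attribute [instance] catP catM catM' cfpP termM termM' iFull iFaithful i'Full i'Faithful
  catB jEquiv j'Equiv

variable {C : Type u} [Category.{v} C] [HasTerminal C]
variable (H : WeakTemporalDoctrine.{v₂, u₂} C)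

/-- The internal limit functor `lim_X := j₁⁻¹ ∘ ∀_X : M X ⥤ B 1`. -/
def limF (X : C) : H.M X ⥤ H.Bone := H.fa (terminal.from X) ⋙ H.j.inv

/-- The internal colimit functor `colim_X := j₁⁻¹ ∘ ∃_X : M X ⥤ B 1`. -/
def colimF (X : C) : H.M X ⥤ H.Bone := H.ex (terminal.from X) ⋙ H.j.inv

/-- The internal colimit functor for right closed parts,
`colim'_X := j'₁⁻¹ ∘ ∃'_X : M' X ⥤ B 1`. -/
def colim'F (X : C) : H.M' X ⥤ H.Bone := H.ex' (terminal.from X) ⋙ H.j'.inv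

/-- The end functor `end_X := j₁⁻¹ ∘ ∀_X ∘ □_X : P X ⥤ B 1`. -/
def endF (X : C) : H.P X ⥤ H.Bone := H.sq X ⋙ H.limF X

/-- The coend functor `coend_X := j₁⁻¹ ∘ ∃_X ∘ ⋄_X : P X ⥤ B 1`. -/
def coendF (X : C) : H.P X ⥤ H.Bone := H.dm X ⋙ H.colimF X

/-- The `B 1`-valued hom `nat_X (L, M) := end_X (i L ⟹ i M)` of `M X`. -/
def natF (X : C) : (H.M X)ᵒᵖ × H.M X ⥤ H.Bone :=
  expBifun (H.i X) (H.expo X) ⋙ H.endF X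

/-- The `B 1`-valued tensor `ten_X (N, M) := coend_X (i' N × i M)`. -/
def tenF (X : C) : H.M' X × H.M X ⥤ H.Bone :=
  (H.i' X).prod (H.i X) ⋙ MonoidalCategory.tensor (H.P X) ⋙ H.coendF X

/-- The functor `M ↦ nat_X (L, M)` for a fixed left closed part `L`. -/
def natWith {X : C} (L : H.M X) : H.M X ⥤ H.Bone :=
  letI := H.expo X L
  H.i X ⋙ ihom ((H.i X).obj L) ⋙ H.endF X

/-- The functor `M ↦ ten_X (N, M)` for a fixed right closed part `N`. -/
def tenWith {X : C} (N : H.M' X) : H.M X ⥤ H.Bone :=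
  H.i X ⋙ tensorLeft ((H.i' X).obj N) ⋙ H.coendF X

/-! ### Auxiliary constructions for Statement 16 -/

/-- The braiding of a cartesian category, as an isomorphism of bifunctors
`swap ⋙ tensor ≅ tensor`. -/
def swapTensorIso (Q : Type u₂) [Category.{v₂} Q] [CartesianMonoidalCategory Q] :
    CategoryTheory.Prod.swap Q Q ⋙ MonoidalCategory.tensor Q ≅ MonoidalCategory.tensor Q :=
  letI : BraidedCategory Q := .ofCartesianMonoidalCategory
  NatIso.ofComponents (fun AB => β_ AB.2 AB.1) (by
    intro AB A'B' fg
    exact BraidedCategory.braiding_naturality fg.2 fg.1)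

/-- Substitution on left closed parts is (pseudo)functorial, via fully faithfulness
of `i` and functoriality of substitution on the ambient categories. -/
def msubComp {X Y Z : C} (f : X ⟶ Y) (g : Y ⟶ Z) :
    H.msub (f ≫ g) ≅ H.msub g ⋙ H.msub f :=
  Functor.fullyFaithfulCancelRight (H.i X) <|
    H.mcompat (f ≫ g) ≪≫ Functor.isoWhiskerLeft (H.i Z) (H.subComp f g) ≪≫
      (Functor.associator _ _ _).symm ≪≫
      Functor.isoWhiskerRight (H.mcompat g).symm (H.sub f) ≪≫ Functor.associator _ _ _ ≪≫
      Functor.isoWhiskerLeft (H.msub g) (H.mcompat f).symm ≪≫ (Functor.associator _ _ _).symm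

/-- `∃` on left closed parts is (pseudo)functorial, by uniqueness of left adjoints. -/
def exComp {X Y Z : C} (f : X ⟶ Y) (g : Y ⟶ Z) :
    H.ex (f ≫ g) ≅ H.ex f ⋙ H.ex g :=
  ((H.exAdj (f ≫ g)).ofNatIsoRight (H.msubComp f g)).leftAdjointUniq
    ((H.exAdj f).comp (H.exAdj g))

/-- The Beck–Chevalley style law `∃_f ∘ ⋄_X ≅ ⋄_Y ∘ Σ_f`, by uniqueness of left
adjoints of `msub f ⋙ i X ≅ i Y ⋙ sub f`. -/
def dmExIso {X Y : C} (f : X ⟶ Y) : H.dm X ⋙ H.ex f ≅ H.sigma f ⋙ H.dm Y :=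
  (((H.dmAdj X).comp (H.exAdj f)).ofNatIsoRight (H.mcompat f)).leftAdjointUniq
    ((H.sigmaAdj f).comp (H.dmAdj Y))

end WeakTemporalDoctrine

open WeakTemporalDoctrine in
/-- In a weak temporal doctrine, the tensor-hom style law
`ten_X (f'• N, L) ≅ ten_Y (N, ∃_f L)` holds naturally, where
`ten_X (N, M) := coend_X (i' N × i M)` with `coend_X := j₁⁻¹ ∘ ⋄₁ ∘ Σ_X`. -/
theorem statement16 {C : Type u} [Category.{v} C] [HasTerminal C]
    (H : WeakTemporalDoctrine.{v₂, u₂} C) {X Y : C} (f : X ⟶ Y) :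
    Nonempty (((H.m'sub f).prod (𝟭 (H.M X)) ⋙ H.tenF X) ≅
      ((𝟭 (H.M' Y)).prod (H.ex f) ⋙ H.tenF Y)) := by
  obtain ⟨frob⟩ := H.frobenius f
  obtain ⟨mf⟩ := H.mixedFrob Y
  -- the swapped Frobenius law `Σ_f (f* A ⊗ B) ≅ A ⊗ Σ_f B`
  let frob' : (H.sub f).prod (𝟭 (H.P X)) ⋙ MonoidalCategory.tensor (H.P X) ⋙ H.sigma f ≅
      (𝟭 (H.P Y)).prod (H.sigma f) ⋙ MonoidalCategory.tensor (H.P Y) :=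
    Functor.isoWhiskerLeft (CategoryTheory.Prod.swap (H.P Y) (H.P X) ⋙ (𝟭 (H.P X)).prod (H.sub f))
        (Functor.isoWhiskerRight (swapTensorIso (H.P X)) (H.sigma f)) ≪≫
      Functor.isoWhiskerLeft (CategoryTheory.Prod.swap (H.P Y) (H.P X)) frob ≪≫
      Functor.isoWhiskerLeft ((𝟭 (H.P Y)).prod (H.sigma f)) (swapTensorIso (H.P Y))
  -- the swapped mixed Frobenius law `⋄(i' N ⊗ A) ≅ ⋄(i' N ⊗ i ⋄ A)`
  let mf' : (H.i' Y).prod (𝟭 (H.P Y)) ⋙ MonoidalCategory.tensor (H.P Y) ⋙ H.dm Y ≅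
      (H.i' Y).prod (H.dm Y ⋙ H.i Y) ⋙ MonoidalCategory.tensor (H.P Y) ⋙ H.dm Y :=
    Functor.isoWhiskerLeft (CategoryTheory.Prod.swap (H.M' Y) (H.P Y) ⋙ (𝟭 (H.P Y)).prod (H.i' Y))
        (Functor.isoWhiskerRight (swapTensorIso (H.P Y)) (H.dm Y)) ≪≫
      Functor.isoWhiskerLeft (CategoryTheory.Prod.swap (H.M' Y) (H.P Y)) mf ≪≫
      Functor.isoWhiskerLeft ((H.i' Y).prod (H.dm Y ⋙ H.i Y))
        (Functor.isoWhiskerRight (swapTensorIso (H.P Y)) (H.dm Y))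
  -- `∃_{!_X} ≅ ∃_f ⋙ ∃_{!_Y}`
  let exX : H.ex (terminal.from X) ≅ H.ex f ⋙ H.ex (terminal.from Y) :=
    eqToIso (congrArg H.ex (terminal.comp_from f).symm) ≪≫
      H.exComp f (terminal.from Y)
  refine ⟨?_⟩
  calc ((H.m'sub f).prod (𝟭 (H.M X)) ⋙ H.tenF X)
      ≅ (H.i' Y ⋙ H.sub f).prod (H.i X) ⋙ MonoidalCategory.tensor (H.P X) ⋙
          H.dm X ⋙ H.ex (terminal.from X) ⋙ H.j.inv :=
        Functor.isoWhiskerRight (NatIso.prod (H.m'compat f) (Iso.refl (H.i X)))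
          (MonoidalCategory.tensor (H.P X) ⋙ H.dm X ⋙ H.ex (terminal.from X) ⋙ H.j.inv)
    _ ≅ (H.i' Y ⋙ H.sub f).prod (H.i X) ⋙ MonoidalCategory.tensor (H.P X) ⋙
          H.dm X ⋙ (H.ex f ⋙ H.ex (terminal.from Y)) ⋙ H.j.inv :=
        Functor.isoWhiskerLeft ((H.i' Y ⋙ H.sub f).prod (H.i X) ⋙
            MonoidalCategory.tensor (H.P X) ⋙ H.dm X)
          (Functor.isoWhiskerRight exX H.j.inv)
    _ ≅ (H.i' Y ⋙ H.sub f).prod (H.i X) ⋙ MonoidalCategory.tensor (H.P X) ⋙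
          (H.sigma f ⋙ H.dm Y) ⋙ H.ex (terminal.from Y) ⋙ H.j.inv :=
        Functor.isoWhiskerLeft ((H.i' Y ⋙ H.sub f).prod (H.i X) ⋙
            MonoidalCategory.tensor (H.P X))
          (Functor.isoWhiskerRight (H.dmExIso f) (H.ex (terminal.from Y) ⋙ H.j.inv))
    _ ≅ (H.i' Y).prod (H.i X) ⋙
          ((𝟭 (H.P Y)).prod (H.sigma f) ⋙ MonoidalCategory.tensor (H.P Y)) ⋙
          H.dm Y ⋙ H.ex (terminal.from Y) ⋙ H.j.inv :=
        Functor.isoWhiskerLeft ((H.i' Y).prod (H.i X))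
          (Functor.isoWhiskerRight frob' (H.dm Y ⋙ H.ex (terminal.from Y) ⋙ H.j.inv))
    _ ≅ (𝟭 (H.M' Y)).prod (H.i X ⋙ H.sigma f) ⋙
          ((H.i' Y).prod (H.dm Y ⋙ H.i Y) ⋙ MonoidalCategory.tensor (H.P Y) ⋙ H.dm Y) ⋙
          H.ex (terminal.from Y) ⋙ H.j.inv :=
        Functor.isoWhiskerLeft ((𝟭 (H.M' Y)).prod (H.i X ⋙ H.sigma f))
          (Functor.isoWhiskerRight mf' (H.ex (terminal.from Y) ⋙ H.j.inv))
    _ ≅ (H.i' Y).prod (H.ex f ⋙ H.i Y) ⋙ MonoidalCategory.tensor (H.P Y) ⋙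
          H.dm Y ⋙ H.ex (terminal.from Y) ⋙ H.j.inv :=
        Functor.isoWhiskerRight
          (NatIso.prod (Iso.refl (H.i' Y)) (Functor.isoWhiskerRight (H.exIso f).symm (H.i Y)))
          (MonoidalCategory.tensor (H.P Y) ⋙ H.dm Y ⋙ H.ex (terminal.from Y) ⋙ H.j.inv)
    _ ≅ ((𝟭 (H.M' Y)).prod (H.ex f) ⋙ H.tenF Y) := Iso.refl _
end
end
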